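/- arXiv:0909.0694 — 8 statements merged into one kernel-verified Lean document; each statement's English description precedes it below -/
import Mathlib

section
/- For every n ≥ 1, the type B Eulerian polynomial satisfies Σ_{σ ∈ B_n} t^{des_B(σ)} = Σ_{w ∈ S_n} 4^{pk(0w)} t^{pk(0w)} (1+t)^{n−2·pk(0w)} as polynomials in t. -/
open Polynomial Finset

attribute [local instance] Classical.propDecidable

/-- The value `w_i` of the permutation word `w = w_1 ⋯ w_n` of `[n] = {1,…,n}`
(one-indexed); by convention the value is `0` outside the range, so `w_0 = 0`. -/
def pval (n : ℕ) (w : Equiv.Perm (Fin n)) (i : ℕ) : ℕ :=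
  if h : 1 ≤ i ∧ i ≤ n then ((w ⟨i - 1, by omega⟩ : Fin n) : ℕ) + 1 else 0

/-- The set of peaks of `0w`: positions `i ∈ [n-1]` with `w_{i-1} < w_i > w_{i+1}`
(where `w_0 = 0`). -/
def pkSet (n : ℕ) (w : Equiv.Perm (Fin n)) : Finset ℕ :=
  (Finset.Icc 1 (n - 1)).filter fun i =>
    pval n w (i - 1) < pval n w i ∧ pval n w (i + 1) < pval n w i

/-- `pk(0w)`, the number of peaks of `0w`. -/
def pk (n : ℕ) (w : Equiv.Perm (Fin n)) : ℕ := (pkSet n w).card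

/-- A signed permutation `σ ∈ B_n`, encoded as an (unsigned) permutation together
with a sign for each position, evaluated as an integer sequence `σ(1), …, σ(n)`
(one-indexed, with value `0` outside the range, so `σ(0) = 0`). -/
def sval (n : ℕ) (σ : Equiv.Perm (Fin n) × (Fin n → Bool)) (i : ℕ) : ℤ :=
  if h : 1 ≤ i ∧ i ≤ n then
    (if σ.2 ⟨i - 1, by omega⟩ then -(((σ.1 ⟨i - 1, by omega⟩ : Fin n) : ℕ) + 1 : ℤ)
     else (((σ.1 ⟨i - 1, by omega⟩ : Fin n) : ℕ) + 1 : ℤ))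
  else 0

/-- The type B descent number: `des_B(σ) = #{i ∈ {0,…,n-1} : σ(i) > σ(i+1)}`, with `σ(0) = 0`. -/
def desB (n : ℕ) (σ : Equiv.Perm (Fin n) × (Fin n → Bool)) : ℕ :=
  ((Finset.range n).filter fun i => sval n σ (i + 1) < sval n σ i).card

/-!
Fix the unsigned word `w` and sum over the `2ⁿ` sign vectors. Where `0w` descends, the signed
word descends iff the left letter is positive; where it ascends, iff the right letter is negative.
Charging each signed descent to that letter makes `X ^ des_B` a product over letters, so the sum
over signs is `∏ⱼ (X^[w_{j-1} < w_j] + X^[w_j > w_{j+1}])` (with `w_{n+1} = ∞`): a factor `2X` at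
each peak, `2` at each valley and `1 + X` elsewhere. The descent pattern starts and ends with an
ascent, so valleys and peaks are equinumerous, and the sum is `4^pk X^pk (1 + X)^(n - 2 pk)`.
-/

def signed (neg : Bool) (a : ℕ) : ℤ := if neg then -(a : ℤ) else a

lemma signed_lt_signed_iff {a b : ℕ} (hb : 0 < b) (hab : a ≠ b) (x y : Bool) :
    signed y b < signed x a ↔ if b < a then x = false else y = true := by
  by_cases h : b < a <;> cases x <;> cases y <;> simp [signed, h] <;> omega

section BoolSequences

variable (c : ℕ → Bool) (n : ℕ)

def rises : Finset ℕ := {i ∈ range n | c i = false ∧ c (i + 1) = true}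

def falls : Finset ℕ := {i ∈ range n | c i = true ∧ c (i + 1) = false}

def flats : Finset ℕ := {i ∈ range n | c i = c (i + 1)}

lemma card_rises_eq_card_falls (h : c 0 = c n) : #(rises c n) = #(falls c n) := by
  have htel := Finset.sum_range_sub (fun i => ((c i).toNat : ℤ)) n
  have hstep : ∀ i, ((c (i + 1)).toNat : ℤ) - (c i).toNat =
      (if c i = false ∧ c (i + 1) = true then 1 else 0) -
        (if c i = true ∧ c (i + 1) = false then 1 else 0) := by
    intro i; cases c i <;> cases c (i + 1) <;> simp
  simp only [hstep, h, sub_self, Finset.sum_sub_distrib, Finset.sum_boole] at htel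
  unfold rises falls
  exact_mod_cast sub_eq_zero.mp htel

lemma card_rises_add_card_falls_add_card_flats :
    #(rises c n) + #(falls c n) + #(flats c n) = n := by
  simp only [rises, falls, flats, Finset.card_filter, ← Finset.sum_add_distrib]
  calc _ = ∑ _ ∈ range n, 1 :=
        Finset.sum_congr rfl fun i _ => by cases c i <;> cases c (i + 1) <;> simp
    _ = n := by simp

def letterDescents (before after neg : Bool) : ℕ :=
  if neg then (!before).toNat else after.toNat

noncomputable def letterPoly (before after : Bool) : ℤ[X] :=
  ∑ neg : Bool, X ^ letterDescents before after neg

lemma card_signedDescents_eq_sum_letterDescents (s : ℕ → Bool) (h0 : c 0 = false) (hn : c n = false) :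
    #{i ∈ range n | if c i then s i = false else s (i + 1) = true} =
      ∑ i ∈ range n, letterDescents (c i) (c (i + 1)) (s (i + 1)) := by
  set left : ℕ → ℕ := fun i => if c i = true ∧ s i = false then 1 else 0
  set right : ℕ → ℕ := fun i => if c i = false ∧ s (i + 1) = true then 1 else 0
  have hshift : ∑ i ∈ range n, left (i + 1) = ∑ i ∈ range n, left i := by
    have h1 := Finset.sum_range_succ left n
    have h2 := Finset.sum_range_succ' left n
    have hl0 : left 0 = 0 := by simp [left, h0]
    have hln : left n = 0 := by simp [left, hn]
    omega
  rw [Finset.card_filter]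
  calc _ = ∑ i ∈ range n, (left i + right i) :=
        Finset.sum_congr rfl fun i _ => by simp only [left, right]; cases c i <;> simp
    _ = ∑ i ∈ range n, (right i + left (i + 1)) := by
        rw [Finset.sum_add_distrib, Finset.sum_add_distrib, hshift, add_comm]
    _ = _ := Finset.sum_congr rfl fun i _ => by
        simp only [left, right, letterDescents]
        cases c i <;> cases c (i + 1) <;> cases s (i + 1) <;> simp

lemma sum_X_pow_sum_letterDescents :
    ∑ ε : Fin n → Bool, (X : ℤ[X]) ^ ∑ j : Fin n, letterDescents (c j) (c (j + 1)) (ε j) =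
      ∏ i ∈ range n, letterPoly (c i) (c (i + 1)) := by
  simp_rw [← Finset.prod_pow_eq_pow_sum]
  rw [Finset.prod_range]
  exact (Fintype.prod_sum fun (j : Fin n) neg => X ^ letterDescents (c j) (c (j + 1)) neg).symm

lemma letterPoly_eq (x y : Bool) :
    letterPoly x y = (2 * X) ^ (if x = false ∧ y = true then 1 else 0) *
      2 ^ (if x = true ∧ y = false then 1 else 0) * (1 + X) ^ (if x = y then 1 else 0) := by
  cases x <;> cases y <;> simp [letterPoly, letterDescents]; ring

lemma prod_letterPoly (h : c 0 = c n) :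
    ∏ i ∈ range n, letterPoly (c i) (c (i + 1)) =
      4 ^ #(rises c n) * X ^ #(rises c n) * (1 + X) ^ (n - 2 * #(rises c n)) := by
  have hflats : #(flats c n) = n - 2 * #(rises c n) := by
    have := card_rises_add_card_falls_add_card_flats c n
    rw [← card_rises_eq_card_falls c n h] at this
    omega
  simp only [letterPoly_eq, Finset.prod_mul_distrib, Finset.prod_pow_eq_pow_sum,
    Finset.sum_boole, Nat.cast_id]
  change (2 * X) ^ #(rises c n) * 2 ^ #(falls c n) * (1 + X) ^ #(flats c n) = _
  rw [← card_rises_eq_card_falls c n h, hflats, mul_pow, show (4 : ℤ[X]) = 2 * 2 by norm_num,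
    mul_pow]
  ring

end BoolSequences

section SignedPermutations

variable (n : ℕ) (w : Equiv.Perm (Fin n))

lemma pval_zero : pval n w 0 = 0 := by simp [pval]

lemma pval_pos {i : ℕ} (h1 : 1 ≤ i) (h2 : i ≤ n) : 0 < pval n w i := by
  simp [pval, h1, h2]

lemma pval_ne_pval_succ {i : ℕ} (hi : i < n) : pval n w i ≠ pval n w (i + 1) := by
  rcases Nat.eq_zero_or_pos i with rfl | hi0
  · rw [pval_zero]
    exact (pval_pos n w le_rfl hi).ne
  · unfold pval
    rw [dif_pos ⟨hi0, hi.le⟩, dif_pos ⟨by omega, hi⟩]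
    simp only [ne_eq, add_left_inj, Fin.val_inj, w.injective.eq_iff, Fin.ext_iff]
    omega

-- The guard `i < n` reads `w_{n+1}` as `∞` rather than as `pval`'s padding `0`.
def descentPattern (i : ℕ) : Bool := decide (i < n ∧ pval n w (i + 1) < pval n w i)

lemma descentPattern_zero : descentPattern n w 0 = false := by
  simp [descentPattern, pval_zero]

lemma descentPattern_self : descentPattern n w n = false := by
  simp [descentPattern]

def signAt (ε : Fin n → Bool) (i : ℕ) : Bool :=
  if h : 1 ≤ i ∧ i ≤ n then ε ⟨i - 1, by omega⟩ else false

lemma sval_eq_signed (ε : Fin n → Bool) (i : ℕ) :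
    sval n (w, ε) i = signed (signAt n ε i) (pval n w i) := by
  unfold sval signAt pval signed
  split_ifs <;> simp_all

lemma sval_succ_lt_sval_iff (ε : Fin n → Bool) {i : ℕ} (hi : i < n) :
    sval n (w, ε) (i + 1) < sval n (w, ε) i ↔
      if descentPattern n w i then signAt n ε i = false else signAt n ε (i + 1) = true := by
  rw [sval_eq_signed, sval_eq_signed,
    signed_lt_signed_iff (pval_pos n w (by omega) hi) (pval_ne_pval_succ n w hi)]
  simp [descentPattern, hi]

lemma desB_eq_sum_letterDescents (ε : Fin n → Bool) :
    desB n (w, ε) = ∑ j : Fin n,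
      letterDescents (descentPattern n w j) (descentPattern n w (j + 1)) (ε j) := by
  have hsign : ∀ j : Fin n, signAt n ε (j + 1) = ε j := fun j => by
    simp [signAt, Nat.succ_le_of_lt j.isLt]
  calc desB n (w, ε) = #{i ∈ range n | if descentPattern n w i then signAt n ε i = false
        else signAt n ε (i + 1) = true} :=
        congrArg card <| Finset.filter_congr fun i hi =>
          sval_succ_lt_sval_iff n w ε (Finset.mem_range.1 hi)
    _ = ∑ i ∈ range n, letterDescents (descentPattern n w i) (descentPattern n w (i + 1))
          (signAt n ε (i + 1)) :=
        card_signedDescents_eq_sum_letterDescents _ _ _ (descentPattern_zero n w) (descentPattern_self n w)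
    _ = _ := by simp only [Finset.sum_range, hsign]

lemma mem_rises_descentPattern_iff {i : ℕ} :
    i ∈ rises (descentPattern n w) n ↔ i + 1 ∈ pkSet n w := by
  have hne : i < n → pval n w i ≠ pval n w (i + 1) := pval_ne_pval_succ n w
  simp only [rises, pkSet, descentPattern, Finset.mem_filter, Finset.mem_range, Finset.mem_Icc,
    decide_eq_false_iff_not, decide_eq_true_eq, Nat.add_sub_cancel]
  omega

lemma pk_eq_card_rises : pk n w = #(rises (descentPattern n w) n) := by
  have hpos : ∀ j ∈ pkSet n w, 1 ≤ j := fun j hj => (Finset.mem_Icc.1 (Finset.mem_filter.1 hj).1).1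
  refine Finset.card_nbij' (· - 1) (· + 1) (fun j hj => ?_) (fun i hi => ?_) (fun j hj => ?_)
    (fun i _ => by simp)
  · rw [Finset.mem_coe, mem_rises_descentPattern_iff, Nat.sub_add_cancel (hpos j hj)]
    exact hj
  · exact (mem_rises_descentPattern_iff n w).1 hi
  · simp [Nat.sub_add_cancel (hpos j hj)]

lemma sum_X_pow_desB :
    ∑ ε : Fin n → Bool, (X : ℤ[X]) ^ desB n (w, ε) =
      4 ^ pk n w * X ^ pk n w * (1 + X) ^ (n - 2 * pk n w) := by
  simp only [desB_eq_sum_letterDescents, sum_X_pow_sum_letterDescents, pk_eq_card_rises]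
  exact prod_letterPoly _ n ((descentPattern_zero n w).trans (descentPattern_self n w).symm)

end SignedPermutations

theorem typeB_gamma_general (n : ℕ) :
    ∑ σ : Equiv.Perm (Fin n) × (Fin n → Bool), (X : Polynomial ℤ) ^ desB n σ =
      ∑ w : Equiv.Perm (Fin n),
        (4 : Polynomial ℤ) ^ pk n w * X ^ pk n w * (1 + X) ^ (n - 2 * pk n w) := by
  rw [Fintype.sum_prod_type]
  exact Finset.sum_congr rfl fun w _ => sum_X_pow_desB n w

/-- The type `B_n` Eulerian polynomial satisfies
`Σ_{σ ∈ B_n} t^{des_B σ} = Σ_{w ∈ S_n} 4^{pk(0w)} t^{pk(0w)} (1+t)^{n-2 pk(0w)}`. -/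
theorem typeB_gamma (n : ℕ) (hn : 1 ≤ n) :
    ∑ σ : Equiv.Perm (Fin n) × (Fin n → Bool), (X : Polynomial ℤ) ^ desB n σ =
      ∑ w : Equiv.Perm (Fin n),
        (4 : Polynomial ℤ) ^ pk n w * X ^ pk n w * (1 + X) ^ (n - 2 * pk n w) :=
  typeB_gamma_general n
end

section
/- For every n ≥ 1 and every k ≥ 0, the map π sending w to its set of descent pairs, π(w) = {(w_{i+1}, w_i) : i ∈ [n−1], w_i > w_{i+1}}, is a bijection from {w ∈ Pk_n(312) : des(w) = k} onto the collection of k-element subsets of {(a,b) : 1 ≤ a < b ≤ n−1} whose elements are pairwise noncrossing. -/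
open Finset

attribute [local instance] Classical.propDecidable

/-- The descent set of `w`: positions `i ∈ [n-1]` with `w_i > w_{i+1}`. -/
def desSet (n : ℕ) (w : Equiv.Perm (Fin n)) : Finset ℕ :=
  (Finset.Icc 1 (n - 1)).filter fun i => pval n w (i + 1) < pval n w i

/-- The number of descents of `w`. -/
def des (n : ℕ) (w : Equiv.Perm (Fin n)) : ℕ := (desSet n w).card

/-- `w ∈ Pk_n`: `w` has no double descents and no final descent. -/
def IsPk (n : ℕ) (w : Equiv.Perm (Fin n)) : Prop :=
  (∀ i ∈ Finset.Icc 2 (n - 1),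
      ¬(pval n w i < pval n w (i - 1) ∧ pval n w (i + 1) < pval n w i)) ∧
  ¬(pval n w n < pval n w (n - 1))

/-- `w` is 312-avoiding: there are no positions `i < j < k` with `w_j < w_k < w_i`. -/
def Avoids312 (n : ℕ) (w : Equiv.Perm (Fin n)) : Prop :=
  ∀ i ∈ Finset.Icc 1 n, ∀ j ∈ Finset.Icc 1 n, ∀ k ∈ Finset.Icc 1 n,
    i < j → j < k → ¬(pval n w j < pval n w k ∧ pval n w k < pval n w i)

/-- Two pairs `(a,b)` and `(c,d)` with `a < b`, `c < d` are noncrossing: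
`a,b,c,d` are pairwise distinct and neither `a < c < b < d` nor `c < a < d < b`. -/
def Noncrossing (p q : ℕ × ℕ) : Prop :=
  p.1 ≠ q.1 ∧ p.1 ≠ q.2 ∧ p.2 ≠ q.1 ∧ p.2 ≠ q.2 ∧
  ¬(p.1 < q.1 ∧ q.1 < p.2 ∧ p.2 < q.2) ∧ ¬(q.1 < p.1 ∧ p.1 < q.2 ∧ q.2 < p.2)

/-- The map `π` sending `w` to its set of descent pairs `(w_{i+1}, w_i)`. -/
def descentPairs (n : ℕ) (w : Equiv.Perm (Fin n)) : Finset (ℕ × ℕ) :=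
  (desSet n w).image fun i => (pval n w (i + 1), pval n w i)

/-!
A permutation is handled through its word, a list of distinct naturals. In a 312-avoiding word
without double descents, the largest letter `M` is one of the last two letters: letters `x`, `y`
right after `M` would form the pattern 312 if `x < y` and a double descent if `x > y`. So the word
is either `u ++ [M]` or `u ++ [M, c]`; in the second case 312-avoidance forces `u` to list its
letters below `c` before those above `c`, and `(c, M)` is the only descent pair with top `M`. The
pieces are words of the same kind on smaller intervals, so a word is determined by its descent
pairs, and for a noncrossing set of pairs the same recursion builds a word with exactly those
descent pairs. Finally, no final descent means that `n` comes last, i.e. that no descent pair has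
top `n`.
-/

-- Demoted so that `decide`, `insert` and `∪` elaborate with the canonical instances.
attribute [local instance low] Classical.propDecidable

namespace List

section

variable {α : Type*}

theorem append_eq_pair_of_ne_nil {l₁ l₂ : List α} {x y : α}
    (h₁ : l₁ ≠ []) (h₂ : l₂ ≠ []) (h : l₁ ++ l₂ = [x, y]) : l₁ = [x] ∧ l₂ = [y] := by
  rcases l₁ with _ | ⟨u, _ | ⟨v, l₁⟩⟩ <;> simp_all

theorem append_eq_triple_of_ne_nil {l₁ l₂ : List α} {x y z : α}
    (h₁ : l₁ ≠ []) (h₂ : l₂ ≠ []) (h : l₁ ++ l₂ = [x, y, z]) :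
    (l₁ = [x] ∧ l₂ = [y, z]) ∨ (l₁ = [x, y] ∧ l₂ = [z]) := by
  rcases l₁ with _ | ⟨u, _ | ⟨v, _ | ⟨t, l₁⟩⟩⟩ <;> simp_all

theorem pair_infix_iff {l : List α} {x y : α} :
    [x, y] <:+: l ↔ ∃ i, ∃ h : i + 1 < l.length, l[i] = x ∧ l[i + 1] = y := by
  rw [infix_iff_getElem?]
  constructor
  · rintro ⟨k, hk, h⟩
    have h0 := h 0 (by simp)
    have h1 := h 1 (by simp)
    simp only [length_cons, length_nil] at hk
    refine ⟨k, by omega, ?_, ?_⟩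
    · simpa [getElem?_eq_getElem (show k < l.length by omega)] using h0
    · simpa [getElem?_eq_getElem (show k + 1 < l.length by omega), Nat.add_comm] using h1
  · rintro ⟨i, hi, rfl, rfl⟩
    refine ⟨i, by simp; omega, fun j hj => ?_⟩
    simp only [length_cons, length_nil] at hj
    interval_cases j <;> simp [Nat.add_comm]

theorem triple_infix_iff {l : List α} {x y z : α} :
    [x, y, z] <:+: l ↔ ∃ i, ∃ h : i + 2 < l.length, l[i] = x ∧ l[i + 1] = y ∧ l[i + 2] = z := by
  rw [infix_iff_getElem?]
  constructor
  · rintro ⟨k, hk, h⟩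
    have h0 := h 0 (by simp)
    have h1 := h 1 (by simp)
    have h2 := h 2 (by simp)
    simp only [length_cons, length_nil] at hk
    refine ⟨k, by omega, ?_, ?_, ?_⟩
    · simpa [getElem?_eq_getElem (show k < l.length by omega)] using h0
    · simpa [getElem?_eq_getElem (show k + 1 < l.length by omega), Nat.add_comm] using h1
    · simpa [getElem?_eq_getElem (show k + 2 < l.length by omega), Nat.add_comm] using h2
  · rintro ⟨i, hi, rfl, rfl, rfl⟩
    refine ⟨i, by simp; omega, fun j hj => ?_⟩
    simp only [length_cons, length_nil] at hj
    interval_cases j <;> simp [Nat.add_comm]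

theorem triple_sublist_ofFn_iff {n : ℕ} {f : Fin n → α} {x y z : α} :
    [x, y, z] <+ ofFn f ↔ ∃ i j k, i < j ∧ j < k ∧ f i = x ∧ f j = y ∧ f k = z := by
  rw [ofFn_eq_map, sublist_map_iff]
  constructor
  · rintro ⟨l', hl', he⟩
    obtain ⟨i, j, k, rfl⟩ : ∃ i j k, l' = [i, j, k] := by
      rcases l' with _ | ⟨i, _ | ⟨j, _ | ⟨k, _ | ⟨_, _⟩⟩⟩⟩ <;> simp at he
      exact ⟨i, j, k, rfl⟩
    simp only [map_cons, map_nil, cons.injEq, and_true] at he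
    have hp := (pairwise_lt_finRange n).sublist hl'
    simp only [pairwise_cons, mem_cons, forall_eq_or_imp, not_mem_nil] at hp
    exact ⟨i, j, k, hp.1.1, hp.2.1.1, he.1.symm, he.2.1.symm, he.2.2.symm⟩
  · rintro ⟨i, j, k, hij, hjk, rfl, rfl, rfl⟩
    refine ⟨[i, j, k], sublist_of_subperm_of_pairwise ?_ ?_ (pairwise_lt_finRange n), rfl⟩
    · refine Nodup.subperm ?_ fun a _ => mem_finRange a
      simp [hij.ne, hjk.ne, (hij.trans hjk).ne]
    · simp [hij, hjk, hij.trans hjk]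

end

variable {α : Type*} [LinearOrder α]

def Avoids312 (l : List α) : Prop :=
  ∀ x y z, [x, y, z] <+ l → ¬(y < z ∧ z < x)

def NoDoubleDescent (l : List α) : Prop :=
  ∀ x y z, [x, y, z] <:+: l → ¬(y < x ∧ z < y)

def descPairs : List α → Finset (α × α)
  | x :: y :: l => (if y < x then {(y, x)} else ∅) ∪ descPairs (y :: l)
  | _ => ∅

@[simp]
theorem descPairs_nil : ([] : List α).descPairs = ∅ := rfl

theorem mem_descPairs {l : List α} {p : α × α} :
    p ∈ l.descPairs ↔ [p.2, p.1] <:+: l ∧ p.1 < p.2 := by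
  induction l with
  | nil => simp [descPairs]
  | cons x l ih =>
    rcases l with _ | ⟨y, l⟩
    · simp only [descPairs, Finset.notMem_empty, false_iff, not_and]
      intro h
      simpa using h.length_le
    · rw [descPairs, Finset.mem_union, ih, infix_cons_iff (l₂ := y :: l)]
      obtain ⟨a, b⟩ := p
      split_ifs with hyx <;> simp only [Finset.mem_singleton, Finset.notMem_empty,
        cons_prefix_cons, Prod.mk.injEq, nil_prefix, and_true] <;> grind

theorem Avoids312.sublist {l l' : List α} (h : l'.Avoids312) (hl : l <+ l') : l.Avoids312 :=
  fun x y z hs => h x y z (hs.trans hl)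

theorem NoDoubleDescent.infix {l l' : List α} (h : l'.NoDoubleDescent) (hl : l <:+: l') :
    l.NoDoubleDescent :=
  fun x y z hs => h x y z (hs.trans hl)

theorem avoids312_of_length_le_two {l : List α} (h : l.length ≤ 2) : l.Avoids312 :=
  fun x y z hs => absurd hs.length_le (by simp; omega)

theorem noDoubleDescent_of_length_le_two {l : List α} (h : l.length ≤ 2) : l.NoDoubleDescent :=
  fun x y z hs => absurd hs.length_le (by simp; omega)

theorem Avoids312.append {a b : List α} (ha : a.Avoids312) (hb : b.Avoids312)
    (h : ∀ x ∈ a, ∀ y ∈ b, x < y) : (a ++ b).Avoids312 := by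
  intro x y z hs
  obtain ⟨l₁, l₂, he, h₁, h₂⟩ := sublist_append_iff.1 hs
  rcases l₁ with _ | ⟨u, _ | ⟨v, _ | ⟨t, _ | ⟨s, l₁⟩⟩⟩⟩ <;>
    simp only [nil_append, cons_append, cons.injEq] at he
  · exact hb x y z (he ▸ h₂)
  · obtain ⟨rfl, rfl⟩ := he
    exact fun hyz => (h x (h₁.subset (by simp)) z (h₂.subset (by simp))).not_gt hyz.2
  · obtain ⟨rfl, rfl, rfl⟩ := he
    exact fun hyz => (h x (h₁.subset (by simp)) z (h₂.subset (by simp))).not_gt hyz.2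
  · obtain ⟨rfl, rfl, rfl, rfl⟩ := he
    exact ha x y z h₁
  · simp at he

theorem Avoids312.append_singleton {l : List α} {c : α} (h : l.Avoids312)
    (hc : ∀ x ∈ l, c < x) : (l ++ [c]).Avoids312 := by
  intro x y z hs
  obtain ⟨l₁, l₂, he, h₁, h₂⟩ := sublist_append_iff.1 hs
  rcases sublist_singleton.1 h₂ with rfl | rfl
  · rw [append_nil] at he
    exact h x y z (he ▸ h₁)
  · rcases l₁ with _ | ⟨u, _ | ⟨v, _ | ⟨t, l₁⟩⟩⟩ <;> simp at he
    obtain ⟨rfl, rfl, rfl⟩ := he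
    exact fun hyz => (hc y (h₁.subset (by simp))).not_gt hyz.1

theorem NoDoubleDescent.append_cons {a r : List α} {x : α} (ha : a.NoDoubleDescent)
    (hr : (x :: r).NoDoubleDescent) (h : ∀ y ∈ a, y < x) : (a ++ x :: r).NoDoubleDescent := by
  intro u v w huvw
  rcases infix_append_iff_ne_nil.1 huvw with h1 | h1 | ⟨l₁, l₂, h₁, h₂, he, hs, hp⟩
  · exact ha u v w h1
  · exact hr u v w h1
  · rcases append_eq_triple_of_ne_nil h₁ h₂ he.symm with ⟨rfl, rfl⟩ | ⟨rfl, rfl⟩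
    · simp only [cons_prefix_cons] at hp
      exact fun huv => (h u (hs.subset (mem_singleton_self u))).not_gt (hp.1 ▸ huv.1)
    · simp only [cons_prefix_cons, nil_prefix, and_true] at hp
      exact fun huv => (h v (hs.subset (by simp))).not_gt (hp ▸ huv.2)

theorem NoDoubleDescent.append {a b : List α} (ha : a.NoDoubleDescent) (hb : b.NoDoubleDescent)
    (h : ∀ x ∈ a, ∀ y ∈ b, x < y) : (a ++ b).NoDoubleDescent := by
  rcases b with _ | ⟨x, r⟩
  · simpa using ha
  · exact ha.append_cons hb fun y hy => h y hy x (mem_cons_self ..)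

theorem descPairs_append_cons {a r : List α} {x : α} (h : ∀ y ∈ a, y < x) :
    (a ++ x :: r).descPairs = a.descPairs ∪ (x :: r).descPairs := by
  ext ⟨u, v⟩
  simp only [Finset.mem_union, mem_descPairs, infix_append_iff_ne_nil]
  constructor
  · rintro ⟨h1 | h1 | ⟨l₁, l₂, h₁, h₂, he, hs, hp⟩, huv⟩
    · exact Or.inl ⟨h1, huv⟩
    · exact Or.inr ⟨h1, huv⟩
    · obtain ⟨rfl, rfl⟩ := append_eq_pair_of_ne_nil h₁ h₂ he.symm
      have hv := h v (hs.subset (mem_singleton_self v))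
      simp only [cons_prefix_cons, nil_prefix, and_true] at hp
      exact absurd huv (hp ▸ hv).not_gt
  · rintro (⟨h1, huv⟩ | ⟨h1, huv⟩)
    · exact ⟨Or.inl h1, huv⟩
    · exact ⟨Or.inr (Or.inl h1), huv⟩

theorem descPairs_append {a b : List α} (h : ∀ x ∈ a, ∀ y ∈ b, x < y) :
    (a ++ b).descPairs = a.descPairs ∪ b.descPairs := by
  rcases b with _ | ⟨x, r⟩
  · simp [descPairs]
  · exact descPairs_append_cons fun y hy => h y hy x (mem_cons_self ..)

theorem descPairs_append_singleton {a : List α} {x : α} (h : ∀ y ∈ a, y < x) :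
    (a ++ [x]).descPairs = a.descPairs := by
  simp [descPairs_append_cons h, descPairs]

theorem descPairs_append_pair {a : List α} {x y : α} (h : ∀ z ∈ a, z < x) (hyx : y < x) :
    (a ++ [x, y]).descPairs = insert (y, x) a.descPairs := by
  rw [descPairs_append_cons h]
  simp [descPairs, hyx]

theorem length_le_one_of_forall_lt_head {m : α} {r : List α} (h312 : (m :: r).Avoids312)
    (hdd : (m :: r).NoDoubleDescent) (hr : r.Nodup) (hm : ∀ x ∈ r, x < m) : r.length ≤ 1 := by
  rcases r with _ | ⟨x, _ | ⟨y, r⟩⟩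
  · simp
  · simp
  · exfalso
    have hx := hm x (by simp)
    have hy := hm y (by simp)
    rcases lt_trichotomy x y with hxy | rfl | hxy
    · exact h312 m x y (by simp) ⟨hxy, hy⟩
    · simp at hr
    · exact hdd m x y ⟨[], r, rfl⟩ ⟨hx, hxy⟩

theorem eq_filter_lt_append_filter_gt {c : α} {l : List α} (hc : c ∉ l)
    (h : ∀ x y, [x, y] <+ l → ¬(y < c ∧ c < x)) :
    l = l.filter (· < c) ++ l.filter (c < ·) := by
  induction l with
  | nil => rfl
  | cons x l ih =>
    obtain ⟨hxc, hcl⟩ := not_or.1 (mem_cons.not.1 hc)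
    rcases lt_or_gt_of_ne hxc with hx | hx
    · have hl : ∀ y ∈ l, c < y := fun y hy =>
        lt_of_le_of_ne (not_lt.1 fun hy' => h x y (by simpa using hy) ⟨hy', hx⟩)
          (ne_of_mem_of_not_mem hy hcl).symm
      rw [filter_cons_of_neg (by simpa using hx.le), filter_cons_of_pos (by simpa using hx),
        filter_eq_nil_iff.2 fun y hy => by simpa using (hl y hy).le,
        filter_eq_self.2 fun y hy => by simpa using hl y hy, nil_append]
    · simpa [filter_cons, hx, hx.not_gt] using ih hcl fun u v huv => h u v (huv.cons x)

end List

instance : Std.Symm Noncrossing :=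
  ⟨fun _ _ ⟨h₁, h₂, h₃, h₄, h₅, h₆⟩ => ⟨h₁.symm, h₃.symm, h₂.symm, h₄.symm, h₆, h₅⟩⟩

theorem Noncrossing.lt_or_inside {p : ℕ × ℕ} {c d : ℕ} (h : Noncrossing p (c, d))
    (hp : p.1 < p.2) (hd : p.2 ≤ d) : p.2 < c ∨ (c < p.1 ∧ p.2 < d) := by
  obtain ⟨_, _, _, _, _, _⟩ := h
  omega

/-- Unlike in `IsPk`, a final descent is allowed: pieces of the decomposition may end in one. -/
structure PkWord (lo hi : ℕ) (l : List ℕ) : Prop where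
  nodup : l.Nodup
  mem_iff : ∀ v, v ∈ l ↔ lo ≤ v ∧ v < hi
  avoids312 : l.Avoids312
  noDoubleDescent : l.NoDoubleDescent

namespace PkWord

variable {lo hi : ℕ} {l : List ℕ}

theorem nil (h : hi ≤ lo) : PkWord lo hi [] :=
  ⟨List.nodup_nil, fun v => by simp; omega, List.avoids312_of_length_le_two (by simp),
    List.noDoubleDescent_of_length_le_two (by simp)⟩

theorem eq_nil (h : PkWord lo hi l) (hhi : hi ≤ lo) : l = [] :=
  List.eq_nil_iff_forall_not_mem.2 fun v hv => by have := (h.mem_iff v).1 hv; omega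

theorem bounds_of_mem_descPairs (h : PkWord lo hi l) {p : ℕ × ℕ} (hp : p ∈ l.descPairs) :
    lo ≤ p.1 ∧ p.1 < p.2 ∧ p.2 < hi := by
  obtain ⟨hs, hlt⟩ := List.mem_descPairs.1 hp
  have h1 := (h.mem_iff p.1).1 (hs.subset (by simp))
  have h2 := (h.mem_iff p.2).1 (hs.subset (by simp))
  omega

theorem of_infix (h : PkWord lo hi l) {lo' hi' : ℕ} {l' : List ℕ} (hl : l' <:+: l)
    (hmem : ∀ v, v ∈ l' ↔ lo' ≤ v ∧ v < hi') : PkWord lo' hi' l' :=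
  ⟨h.nodup.sublist hl.sublist, hmem, h.avoids312.sublist hl.sublist, h.noDoubleDescent.infix hl⟩

theorem append_singleton (h : PkWord lo hi l) (hlo : lo ≤ hi) : PkWord lo (hi + 1) (l ++ [hi]) where
  nodup := by
    refine h.nodup.append (List.nodup_singleton hi) fun v hv hv' => ?_
    have := (h.mem_iff v).1 hv
    simp at hv'
    omega
  mem_iff v := by simp [h.mem_iff]; omega
  avoids312 := h.avoids312.append (List.avoids312_of_length_le_two (by simp))
    fun x hx y hy => by have := (h.mem_iff x).1 hx; simp at hy; omega
  noDoubleDescent := h.noDoubleDescent.append_cons (List.noDoubleDescent_of_length_le_two (by simp))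
    fun x hx => ((h.mem_iff x).1 hx).2

theorem append_pair {c : ℕ} {a b : List ℕ} (ha : PkWord lo c a) (hb : PkWord (c + 1) hi b)
    (hc : lo ≤ c) (hch : c < hi) : PkWord lo (hi + 1) (a ++ b ++ [hi, c]) where
  nodup := by
    refine List.nodup_append.2 ⟨List.nodup_append.2 ⟨ha.nodup, hb.nodup, fun x hx y hy => ?_⟩,
      by simp; omega, fun x hx y hy => ?_⟩
    · have := (ha.mem_iff x).1 hx; have := (hb.mem_iff y).1 hy; omega
    · simp [ha.mem_iff, hb.mem_iff] at hx hy; omega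
  mem_iff v := by simp [ha.mem_iff, hb.mem_iff]; omega
  avoids312 := by
    have hb' : (b ++ [hi]).Avoids312 := hb.avoids312.append
      (List.avoids312_of_length_le_two (by simp))
      fun x hx y hy => by have := (hb.mem_iff x).1 hx; simp at hy; omega
    rw [List.append_assoc, show b ++ [hi, c] = b ++ [hi] ++ [c] by simp]
    refine ha.avoids312.append (hb'.append_singleton fun x hx => ?_) fun x hx y hy => ?_
    · simp [hb.mem_iff] at hx; omega
    · have := (ha.mem_iff x).1 hx; simp [hb.mem_iff] at hy; omega
  noDoubleDescent := by
    refine (ha.noDoubleDescent.append hb.noDoubleDescent fun x hx y hy => ?_).append_cons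
      (List.noDoubleDescent_of_length_le_two (by simp)) fun x hx => ?_
    · have := (ha.mem_iff x).1 hx; have := (hb.mem_iff y).1 hy; omega
    · simp [ha.mem_iff, hb.mem_iff] at hx; omega

theorem descPairs_append_singleton (h : PkWord lo hi l) : (l ++ [hi]).descPairs = l.descPairs :=
  List.descPairs_append_singleton fun x hx => ((h.mem_iff x).1 hx).2

theorem descPairs_append_pair {c : ℕ} {a b : List ℕ} (ha : PkWord lo c a)
    (hb : PkWord (c + 1) hi b) (hch : c < hi) :
    (a ++ b ++ [hi, c]).descPairs = insert (c, hi) (a.descPairs ∪ b.descPairs) := by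
  rw [List.descPairs_append_pair (fun x hx => by simp [ha.mem_iff, hb.mem_iff] at hx; omega) hch,
    List.descPairs_append fun x hx y hy => by
      have := (ha.mem_iff x).1 hx; have := (hb.mem_iff y).1 hy; omega]

theorem decompose (h : PkWord lo (hi + 1) l) (hlo : lo ≤ hi) :
    (∃ m, l = m ++ [hi] ∧ PkWord lo hi m) ∨
      ∃ c a b, lo ≤ c ∧ c < hi ∧ l = a ++ b ++ [hi, c] ∧ PkWord lo c a ∧ PkWord (c + 1) hi b := by
  obtain ⟨p, r, rfl⟩ := List.append_of_mem ((h.mem_iff hi).2 ⟨hlo, by omega⟩)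
  have hnd : (hi :: r).Nodup := h.nodup.sublist (List.sublist_append_right p _)
  have hr : ∀ x ∈ r, x < hi := fun x hx => by
    have := (h.mem_iff x).1 (by simp [hx])
    have : x ≠ hi := fun hxe => (List.nodup_cons.1 hnd).1 (hxe ▸ hx)
    omega
  have hp : ∀ v, v ∈ p ↔ lo ≤ v ∧ v < hi + 1 ∧ v ∉ hi :: r := fun v => by
    rw [← and_assoc, ← h.mem_iff, List.mem_append]
    exact ⟨fun hv => ⟨Or.inl hv, fun hv' => List.disjoint_of_nodup_append h.nodup hv hv'⟩,
      fun ⟨hv, hv'⟩ => hv.resolve_right hv'⟩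
  have hlen := List.length_le_one_of_forall_lt_head
    (h.avoids312.sublist (List.sublist_append_right p _))
    (h.noDoubleDescent.infix List.infix_append_right) (List.nodup_cons.1 hnd).2 hr
  rcases r with _ | ⟨c, _ | ⟨_, _⟩⟩
  · exact Or.inl ⟨p, rfl, h.of_infix List.infix_append_left fun v => by simp [hp]; omega⟩
  · have hc := hr c (by simp)
    have hcp : c ∉ p := fun hcp => by simp [hp] at hcp
    have hlc := ((h.mem_iff c).1 (by simp)).1
    obtain ⟨a, b, rfl, ha, hb⟩ : ∃ a b, p = a ++ b ∧ (∀ v, v ∈ a ↔ lo ≤ v ∧ v < c) ∧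
        ∀ v, v ∈ b ↔ c + 1 ≤ v ∧ v < hi := by
      refine ⟨_, _, List.eq_filter_lt_append_filter_gt hcp
        fun x y hxy => h.avoids312 x y c (hxy.append (by simp)), fun v => ?_, fun v => ?_⟩ <;>
      · simp only [List.mem_filter, hp, List.mem_cons, List.not_mem_nil, or_false,
          decide_eq_true_eq]
        omega
    exact Or.inr ⟨c, a, b, hlc, hc, rfl,
      h.of_infix (List.infix_append_left.trans List.infix_append_left) ha,
      h.of_infix (List.infix_append _ _ _) hb⟩
  · simp at hlen

theorem induction_on {motive : ℕ → ℕ → List ℕ → Prop}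
    (nil : ∀ lo hi, hi ≤ lo → motive lo hi [])
    (snoc : ∀ lo hi m, lo ≤ hi → PkWord lo hi m → motive lo hi m → motive lo (hi + 1) (m ++ [hi]))
    (pair : ∀ lo c hi a b, lo ≤ c → c < hi → PkWord lo c a → PkWord (c + 1) hi b →
      motive lo c a → motive (c + 1) hi b → motive lo (hi + 1) (a ++ b ++ [hi, c]))
    (h : PkWord lo hi l) : motive lo hi l := by
  induction hi using Nat.strong_induction_on generalizing lo l with
  | _ hi ih =>
  rcases hi with _ | hi
  · rw [h.eq_nil (Nat.zero_le _)]
    exact nil _ _ (Nat.zero_le _)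
  rcases Nat.lt_or_ge hi lo with hlt | hle
  · rw [h.eq_nil hlt]
    exact nil _ _ hlt
  rcases h.decompose hle with ⟨m, rfl, hm⟩ | ⟨c, a, b, hc, hch, rfl, ha, hb⟩
  · exact snoc _ _ _ hle hm (ih hi (by omega) hm)
  · exact pair _ _ _ _ _ hc hch ha hb (ih c (by omega) ha) (ih hi (by omega) hb)

theorem pairwise_noncrossing (h : PkWord lo hi l) :
    (l.descPairs : Set (ℕ × ℕ)).Pairwise Noncrossing := by
  refine h.induction_on (motive := fun _ _ l => (l.descPairs : Set (ℕ × ℕ)).Pairwise Noncrossing)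
    (fun _ _ _ => by simp) (fun _ _ _ _ hm ih => ?_) ?_
  · rwa [hm.descPairs_append_singleton]
  · intro lo c hi a b hc hch ha hb iha ihb
    rw [ha.descPairs_append_pair hb hch, Finset.coe_insert, Finset.coe_union,
      Set.pairwise_insert_of_symm, Set.pairwise_union_of_symm]
    refine ⟨⟨iha, ihb, fun p hp q hq _ => ?_⟩, fun p hp _ => ?_⟩
    · have := ha.bounds_of_mem_descPairs hp
      have := hb.bounds_of_mem_descPairs hq
      unfold Noncrossing; omega
    · rcases hp with hp | hp
      · have := ha.bounds_of_mem_descPairs hp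
        unfold Noncrossing; omega
      · have := hb.bounds_of_mem_descPairs hp
        unfold Noncrossing; omega

end PkWord

def pairsIn (S : Finset (ℕ × ℕ)) (lo hi : ℕ) : Finset (ℕ × ℕ) :=
  S.filter fun p => lo ≤ p.1 ∧ p.2 < hi

@[simp]
theorem mem_pairsIn {S : Finset (ℕ × ℕ)} {lo hi : ℕ} {p : ℕ × ℕ} :
    p ∈ pairsIn S lo hi ↔ p ∈ S ∧ lo ≤ p.1 ∧ p.2 < hi :=
  Finset.mem_filter

noncomputable def wordOfPairs (S : Finset (ℕ × ℕ)) (lo : ℕ) : ℕ → List ℕ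
  | 0 => []
  | hi + 1 =>
    if lo ≤ hi then
      if h : ∃ c, (c, hi) ∈ S ∧ lo ≤ c ∧ c < hi then
        wordOfPairs S lo h.choose ++ wordOfPairs S (h.choose + 1) hi ++ [hi, h.choose]
      else wordOfPairs S lo hi ++ [hi]
    else []
termination_by hi => hi
decreasing_by
  · exact Nat.lt_succ_of_lt h.choose_spec.2.2
  all_goals omega

section wordOfPairs

variable {S : Finset (ℕ × ℕ)} {lo hi : ℕ}

theorem wordOfPairs_of_le (h : hi ≤ lo) : wordOfPairs S lo hi = [] := by
  rcases hi with _ | hi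
  · rw [wordOfPairs]
  · rw [wordOfPairs, if_neg (by omega)]

theorem wordOfPairs_succ_of_not_exists (hlo : lo ≤ hi)
    (h : ¬∃ c, (c, hi) ∈ S ∧ lo ≤ c ∧ c < hi) :
    wordOfPairs S lo (hi + 1) = wordOfPairs S lo hi ++ [hi] := by
  rw [wordOfPairs, if_pos hlo, dif_neg h]

theorem wordOfPairs_succ_of_mem {c : ℕ} (hc : (c, hi) ∈ S) (hlo : lo ≤ c) (hch : c < hi)
    (huniq : ∀ c', (c', hi) ∈ S → lo ≤ c' → c' < hi → c' = c) :
    wordOfPairs S lo (hi + 1) = wordOfPairs S lo c ++ wordOfPairs S (c + 1) hi ++ [hi, c] := by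
  have hex : ∃ c, (c, hi) ∈ S ∧ lo ≤ c ∧ c < hi := ⟨c, hc, hlo, hch⟩
  obtain ⟨h₁, h₂, h₃⟩ := hex.choose_spec
  rw [wordOfPairs, if_pos (by omega), dif_pos hex, huniq _ h₁ h₂ h₃]

end wordOfPairs

theorem PkWord.eq_wordOfPairs {lo hi : ℕ} {l : List ℕ} (h : PkWord lo hi l) {S : Finset (ℕ × ℕ)}
    (hS : pairsIn S lo hi = l.descPairs) : l = wordOfPairs S lo hi := by
  refine h.induction_on
    (motive := fun lo hi l => ∀ S, pairsIn S lo hi = l.descPairs → l = wordOfPairs S lo hi)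
    (fun _ _ hhi _ _ => (wordOfPairs_of_le hhi).symm) ?_ ?_ S hS
  · intro lo hi m hle hm ih S hS
    rw [hm.descPairs_append_singleton] at hS
    have hmem := fun p => Finset.ext_iff.1 hS p
    have hnone : ¬∃ c, (c, hi) ∈ S ∧ lo ≤ c ∧ c < hi := fun ⟨c, hc, hlo, hch⟩ => by
      have := hm.bounds_of_mem_descPairs ((hmem (c, hi)).1 (mem_pairsIn.2 ⟨hc, hlo, by simp⟩))
      omega
    rw [wordOfPairs_succ_of_not_exists hle hnone, ← ih S (Finset.ext fun p => ?_)]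
    rw [← hmem, mem_pairsIn, mem_pairsIn]
    refine ⟨fun ⟨hp, h₁, h₂⟩ => ⟨hp, h₁, by omega⟩, fun ⟨hp, h₁, h₂⟩ => ⟨hp, h₁, ?_⟩⟩
    exact (hm.bounds_of_mem_descPairs ((hmem p).1 (mem_pairsIn.2 ⟨hp, h₁, h₂⟩))).2.2
  · intro lo c hi a b hc hch ha hb iha ihb S hS
    rw [ha.descPairs_append_pair hb hch] at hS
    have hmem := fun p => Finset.ext_iff.1 hS p
    have hcS : (c, hi) ∈ S := (mem_pairsIn.1 ((hmem _).2 (Finset.mem_insert_self _ _))).1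
    have huniq : ∀ c', (c', hi) ∈ S → lo ≤ c' → c' < hi → c' = c := fun c' hc' h₁ h₂ => by
      rcases Finset.mem_insert.1 ((hmem _).1 (mem_pairsIn.2 ⟨hc', h₁, by simp⟩)) with h | h
      · exact (Prod.ext_iff.1 h).1
      rcases Finset.mem_union.1 h with h | h
      · have := ha.bounds_of_mem_descPairs h; omega
      · have := hb.bounds_of_mem_descPairs h; omega
    rw [wordOfPairs_succ_of_mem hcS hc hch huniq, ← iha S (Finset.ext fun p => ?_),
      ← ihb S (Finset.ext fun p => ?_)] <;>
    · have h₁ := hmem p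
      have h₂ := fun hp => ha.bounds_of_mem_descPairs (p := p) hp
      have h₃ := fun hp => hb.bounds_of_mem_descPairs (p := p) hp
      simp only [mem_pairsIn, Finset.mem_insert, Finset.mem_union, Prod.ext_iff] at h₁ ⊢
      grind

theorem pkWord_wordOfPairs_of_le {S : Finset (ℕ × ℕ)} (hlt : ∀ p ∈ S, p.1 < p.2) {lo hi : ℕ}
    (h : hi ≤ lo) :
    PkWord lo hi (wordOfPairs S lo hi) ∧ (wordOfPairs S lo hi).descPairs = pairsIn S lo hi := by
  rw [wordOfPairs_of_le h, List.descPairs_nil, eq_comm, Finset.eq_empty_iff_forall_notMem]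
  refine ⟨PkWord.nil h, fun p hp => ?_⟩
  have := hlt p (mem_pairsIn.1 hp).1
  have := (mem_pairsIn.1 hp).2
  omega

theorem pkWord_wordOfPairs {S : Finset (ℕ × ℕ)} (hlt : ∀ p ∈ S, p.1 < p.2)
    (hnc : (S : Set (ℕ × ℕ)).Pairwise Noncrossing) {lo hi : ℕ}
    (hS : ∀ p ∈ S, (lo ≤ p.1 ∧ p.1 < hi) ∨ (lo ≤ p.2 ∧ p.2 < hi) → lo ≤ p.1 ∧ p.2 < hi) :
    PkWord lo hi (wordOfPairs S lo hi) ∧ (wordOfPairs S lo hi).descPairs = pairsIn S lo hi := by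
  induction hi using Nat.strong_induction_on generalizing lo with
  | _ hi ih =>
  rcases hi with _ | hi
  · exact pkWord_wordOfPairs_of_le hlt (Nat.zero_le _)
  rcases Nat.lt_or_ge hi lo with hhi | hle
  · exact pkWord_wordOfPairs_of_le hlt hhi
  by_cases hex : ∃ c, (c, hi) ∈ S ∧ lo ≤ c ∧ c < hi
  · obtain ⟨c, hcS, hc, hch⟩ := hex
    have key : ∀ p ∈ S, p ≠ (c, hi) → (lo ≤ p.1 ∧ p.1 < hi + 1) ∨ (lo ≤ p.2 ∧ p.2 < hi + 1) →
        (lo ≤ p.1 ∧ p.2 < c) ∨ (c + 1 ≤ p.1 ∧ p.2 < hi) := by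
      intro p hp hne hp'
      have := hS p hp hp'
      have := (hnc hp hcS hne).lt_or_inside (hlt p hp) (by omega)
      omega
    have huniq : ∀ c', (c', hi) ∈ S → lo ≤ c' → c' < hi → c' = c := fun c' hc' h₁ h₂ => by
      by_contra hne
      have := key _ hc' (by simpa using hne) (Or.inl ⟨h₁, by omega⟩)
      omega
    obtain ⟨ha, hda⟩ := ih c (by omega) (lo := lo) fun p hp hp' => by
      have := key p hp (by rintro rfl; omega) (by omega)
      omega
    obtain ⟨hb, hdb⟩ := ih hi (by omega) (lo := c + 1) fun p hp hp' => by
      have := key p hp (by rintro rfl; omega) (by omega)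
      omega
    rw [wordOfPairs_succ_of_mem hcS hc hch huniq]
    refine ⟨ha.append_pair hb hc hch, ?_⟩
    rw [ha.descPairs_append_pair hb hch, hda, hdb]
    ext p
    have := key p
    simp only [Finset.mem_insert, Finset.mem_union, mem_pairsIn]
    grind
  · have hne : ∀ p ∈ S, lo ≤ p.1 → p.2 ≠ hi := fun p hp h₁ h₂ =>
      hex ⟨p.1, h₂ ▸ hp, h₁, h₂ ▸ hlt p hp⟩
    obtain ⟨hm, hdm⟩ := ih hi (by omega) (lo := lo) fun p hp hp' => by
      have := hS p hp (by omega)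
      have := hne p hp
      omega
    rw [wordOfPairs_succ_of_not_exists hle hex]
    refine ⟨hm.append_singleton hle, ?_⟩
    rw [hm.descPairs_append_singleton, hdm]
    ext p
    have := hne p
    simp only [mem_pairsIn]
    grind

theorem PkWord.pairsIn_descPairs {lo hi : ℕ} {l : List ℕ} (h : PkWord lo hi l) :
    pairsIn l.descPairs lo hi = l.descPairs :=
  Finset.filter_true_of_mem fun p hp => by
    have := h.bounds_of_mem_descPairs hp
    omega

def word (n : ℕ) (w : Equiv.Perm (Fin n)) : List ℕ :=
  List.ofFn fun i : Fin n => pval n w (i + 1)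

section Permutation

variable {n : ℕ} (w : Equiv.Perm (Fin n))

theorem pval_succ (i : Fin n) : pval n w (i + 1) = w i + 1 := by
  rw [pval, dif_pos ⟨by omega, i.isLt⟩]
  simp

@[simp]
theorem length_word : (word n w).length = n :=
  List.length_ofFn

@[simp]
theorem getElem_word {i : ℕ} (h : i < (word n w).length) : (word n w)[i] = pval n w (i + 1) :=
  List.getElem_ofFn h

theorem word_injective : Function.Injective (word n) := fun w w' h => by
  ext i
  have := congrFun (List.ofFn_injective h) i
  rw [pval_succ, pval_succ] at this
  omega

theorem nodup_word : (word n w).Nodup :=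
  List.nodup_ofFn.2 fun i j h => w.injective (Fin.ext (by rw [pval_succ, pval_succ] at h; omega))

theorem mem_word (v : ℕ) : v ∈ word n w ↔ 1 ≤ v ∧ v < n + 1 := by
  simp only [word, List.mem_ofFn, pval_succ]
  constructor
  · rintro ⟨i, rfl⟩
    omega
  · intro hv
    exact ⟨w.symm ⟨v - 1, by omega⟩, by simp; omega⟩

theorem exists_word_eq {l : List ℕ} (hl : l.Nodup) (hmem : ∀ v, v ∈ l ↔ 1 ≤ v ∧ v < n + 1) :
    ∃ w : Equiv.Perm (Fin n), word n w = l := by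
  have hlen : l.length = n := by
    have := List.toFinset_card_of_nodup hl
    rw [show l.toFinset = Finset.Ico 1 (n + 1) by ext; simp [hmem]] at this
    simp at this
    omega
  have hbound (i : Fin n) : l[i.1] - 1 < n := by
    have := (hmem l[i.1]).1 (List.getElem_mem _)
    omega
  have hinj : Function.Injective fun i : Fin n => (⟨l[i.1] - 1, hbound i⟩ : Fin n) := by
    intro i j h
    have hi := (hmem l[i.1]).1 (List.getElem_mem _)
    have hj := (hmem l[j.1]).1 (List.getElem_mem _)
    have := (hl.getElem_inj_iff).1 (show l[i.1] = l[j.1] by simp at h; omega)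
    exact Fin.ext this
  refine ⟨Equiv.ofBijective _ hinj.bijective_of_finite, List.ext_getElem (by simp [hlen]) ?_⟩
  intro i h₁ h₂
  have := (hmem l[i]).1 (List.getElem_mem _)
  rw [getElem_word, pval_succ _ ⟨i, by simpa using h₁⟩]
  simp
  omega

theorem pval_le (i : ℕ) : pval n w i ≤ n := by
  unfold pval
  split_ifs
  · have := (w ⟨i - 1, by omega⟩).isLt
    omega
  · omega

theorem avoids312_iff_word : Avoids312 n w ↔ (word n w).Avoids312 := by
  simp only [Avoids312, List.Avoids312, word, List.triple_sublist_ofFn_iff, Finset.mem_Icc]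
  constructor
  · rintro h x y z ⟨i, j, k, hij, hjk, rfl, rfl, rfl⟩
    exact h _ ⟨by omega, i.isLt⟩ _ ⟨by omega, j.isLt⟩ _ ⟨by omega, k.isLt⟩
      (by simpa using hij) (by simpa using hjk)
  · intro h i hi j hj k hk hij hjk
    have := h _ _ _ ⟨⟨i - 1, by omega⟩, ⟨j - 1, by omega⟩, ⟨k - 1, by omega⟩,
      Fin.mk_lt_mk.2 (by omega), Fin.mk_lt_mk.2 (by omega), rfl, rfl, rfl⟩
    simpa only [Nat.sub_add_cancel hi.1, Nat.sub_add_cancel hj.1, Nat.sub_add_cancel hk.1]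
      using this

theorem noDoubleDescent_iff_word :
    (∀ i ∈ Finset.Icc 2 (n - 1),
      ¬(pval n w i < pval n w (i - 1) ∧ pval n w (i + 1) < pval n w i)) ↔
    (word n w).NoDoubleDescent := by
  simp only [List.NoDoubleDescent, List.triple_infix_iff, Finset.mem_Icc]
  constructor
  · rintro h x y z ⟨i, hi, rfl, rfl, rfl⟩
    have := h (i + 2) ⟨by omega, by simp at hi; omega⟩
    simpa [Nat.add_assoc] using this
  · intro h i hi
    have := h _ _ _ ⟨i - 2, by simp; omega, rfl, rfl, rfl⟩
    simp only [getElem_word] at this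
    rwa [show i - 2 + 1 + 1 = i by omega, show i - 2 + 1 = i - 1 by omega] at this

theorem descentPairs_eq_descPairs : descentPairs n w = (word n w).descPairs := by
  ext ⟨a, b⟩
  simp only [descentPairs, desSet, Finset.mem_image, Finset.mem_filter, Finset.mem_Icc,
    List.mem_descPairs, List.pair_infix_iff, length_word, getElem_word, Prod.mk.injEq]
  constructor
  · rintro ⟨i, ⟨⟨h₁, h₂⟩, hd⟩, rfl, rfl⟩
    refine ⟨⟨i - 1, by omega, ?_, ?_⟩, hd⟩ <;> congr 1 <;> omega
  · rintro ⟨⟨i, hi, rfl, rfl⟩, hd⟩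
    exact ⟨i + 1, ⟨⟨by omega, by omega⟩, hd⟩, rfl, rfl⟩

theorem card_descentPairs : (descentPairs n w).card = des n w := by
  refine Finset.card_image_of_injOn fun i hi j hj h => ?_
  simp only [desSet, Finset.mem_coe, Finset.mem_filter, Finset.mem_Icc] at hi hj
  have h₂ : (word n w)[i - 1]'(by simp; omega) = (word n w)[j - 1]'(by simp; omega) := by
    simp only [getElem_word, Nat.sub_add_cancel hi.1.1, Nat.sub_add_cancel hj.1.1]
    exact congrArg Prod.snd h
  have := (nodup_word w).getElem_inj_iff.1 h₂
  omega

theorem not_finalDescent_iff (hw : PkWord 1 (n + 1) (word n w)) :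
    ¬pval n w n < pval n w (n - 1) ↔ ∀ p ∈ (word n w).descPairs, p.2 < n := by
  rcases n with _ | n
  · simp [pval, word]
  have hlast : (word (n + 1) w)[n]'(by simp) = pval (n + 1) w (n + 1) := getElem_word w _
  rcases hw.decompose (Nat.le_add_left 1 n) with ⟨m, hm, hmw⟩ | ⟨c, a, b, hc, hcn, hab, ha, hb⟩
  · have hlen : m.length = n := by simpa [hm] using length_word w
    have hmax : pval (n + 1) w (n + 1) = n + 1 := by
      rw [← hlast]
      simp [hm, List.getElem_append_right, hlen]
    rw [hmax, hm, hmw.descPairs_append_singleton]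
    simp only [Nat.add_sub_cancel, not_lt]
    exact ⟨fun _ p hp => (hmw.bounds_of_mem_descPairs hp).2.2, fun _ => pval_le w n⟩
  · rw [hab, ha.descPairs_append_pair hb hcn]
    obtain ⟨p, hp⟩ : ∃ p, a ++ b = p := ⟨_, rfl⟩
    rw [hp] at hab
    have hlen : p.length + 1 = n := by
      have := length_word w
      rw [hab] at this
      simp at this
      omega
    have hfinal : pval (n + 1) w (n + 1) = c := by
      rw [← hlast, List.getElem_of_eq hab]
      simp [List.getElem_append_right, ← hlen]
    have hmax : pval (n + 1) w n = n + 1 := by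
      have := getElem_word w (i := n - 1) (by simp)
      rw [Nat.sub_add_cancel (by omega), List.getElem_of_eq hab] at this
      rw [← this]
      simp [List.getElem_append_right, ← hlen]
    simp only [Nat.add_sub_cancel, hfinal, hmax]
    exact iff_of_false (not_not.2 (by omega)) fun h => (h _ (Finset.mem_insert_self _ _)).false

theorem isPk_and_avoids312_iff : IsPk n w ∧ Avoids312 n w ↔
    PkWord 1 (n + 1) (word n w) ∧ ∀ p ∈ (word n w).descPairs, p.2 < n := by
  rw [IsPk, noDoubleDescent_iff_word, avoids312_iff_word]
  constructor
  · rintro ⟨⟨hdd, hfin⟩, h312⟩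
    have hw : PkWord 1 (n + 1) (word n w) := ⟨nodup_word w, mem_word w, h312, hdd⟩
    exact ⟨hw, (not_finalDescent_iff w hw).1 hfin⟩
  · rintro ⟨hw, htop⟩
    exact ⟨⟨hw.noDoubleDescent, (not_finalDescent_iff w hw).2 htop⟩, hw.avoids312⟩

end Permutation

section PkPermutation

variable {n : ℕ} {w : Equiv.Perm (Fin n)}

theorem descentPairs_bounds (hpk : IsPk n w) (h312 : Avoids312 n w) :
    ∀ p ∈ descentPairs n w, 1 ≤ p.1 ∧ p.1 < p.2 ∧ p.2 ≤ n - 1 := by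
  obtain ⟨hw, htop⟩ := (isPk_and_avoids312_iff w).1 ⟨hpk, h312⟩
  intro p hp
  rw [descentPairs_eq_descPairs] at hp
  have := hw.bounds_of_mem_descPairs hp
  have := htop p hp
  omega

theorem pairwise_noncrossing_descentPairs (hpk : IsPk n w) (h312 : Avoids312 n w) :
    (descentPairs n w : Set (ℕ × ℕ)).Pairwise Noncrossing := by
  rw [descentPairs_eq_descPairs]
  exact ((isPk_and_avoids312_iff w).1 ⟨hpk, h312⟩).1.pairwise_noncrossing

theorem word_eq_wordOfPairs (hpk : IsPk n w) (h312 : Avoids312 n w) :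
    word n w = wordOfPairs (descentPairs n w) 1 (n + 1) := by
  obtain ⟨hw, -⟩ := (isPk_and_avoids312_iff w).1 ⟨hpk, h312⟩
  rw [descentPairs_eq_descPairs]
  exact hw.eq_wordOfPairs hw.pairsIn_descPairs

theorem exists_descentPairs_eq {S : Finset (ℕ × ℕ)}
    (hbound : ∀ p ∈ S, 1 ≤ p.1 ∧ p.1 < p.2 ∧ p.2 ≤ n - 1)
    (hnc : (S : Set (ℕ × ℕ)).Pairwise Noncrossing) :
    ∃ w, IsPk n w ∧ Avoids312 n w ∧ descentPairs n w = S := by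
  obtain ⟨hw, hpairs⟩ := pkWord_wordOfPairs (fun p hp => (hbound p hp).2.1) hnc
    (lo := 1) (hi := n + 1) fun p hp _ => by have := hbound p hp; omega
  have hS : pairsIn S 1 (n + 1) = S := Finset.filter_true_of_mem fun p hp => by
    have := hbound p hp
    omega
  obtain ⟨w, hword⟩ := exists_word_eq hw.nodup hw.mem_iff
  rw [← hword] at hw hpairs
  rw [hS] at hpairs
  obtain ⟨hpk, h312⟩ := (isPk_and_avoids312_iff w).2 ⟨hw, fun p hp => by
    have := hbound p (hpairs ▸ hp)
    omega⟩
  exact ⟨w, hpk, h312, by rw [descentPairs_eq_descPairs, hpairs]⟩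

end PkPermutation

theorem descentPairs_bijection_general (n : ℕ) (k : ℕ) :
    Set.BijOn (descentPairs n)
      {w : Equiv.Perm (Fin n) | IsPk n w ∧ Avoids312 n w ∧ des n w = k}
      {S : Finset (ℕ × ℕ) | S.card = k ∧
        (∀ p ∈ S, 1 ≤ p.1 ∧ p.1 < p.2 ∧ p.2 ≤ n - 1) ∧
        (∀ p ∈ S, ∀ q ∈ S, p ≠ q → Noncrossing p q)} := by
  refine ⟨?_, ?_, ?_⟩
  · rintro w ⟨hpk, h312, rfl⟩
    exact ⟨card_descentPairs w, descentPairs_bounds hpk h312,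
      pairwise_noncrossing_descentPairs hpk h312⟩
  · rintro w ⟨hpk, h312, -⟩ w' ⟨hpk', h312', -⟩ h
    refine word_injective ((word_eq_wordOfPairs hpk h312).trans ?_)
    rw [h, word_eq_wordOfPairs hpk' h312']
  · rintro S ⟨rfl, hbound, hnc⟩
    obtain ⟨w, hpk, h312, rfl⟩ := exists_descentPairs_eq hbound hnc
    exact ⟨w, ⟨hpk, h312, (card_descentPairs w).symm⟩, rfl⟩

/-- The map `π` is a bijection from `{w ∈ Pk_n(312) : des w = k}` onto the
`k`-element subsets of `{(a,b) : 1 ≤ a < b ≤ n-1}` whose elements are pairwise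
noncrossing. -/
theorem descentPairs_bijection (n : ℕ) (hn : 1 ≤ n) (k : ℕ) :
    Set.BijOn (descentPairs n)
      {w : Equiv.Perm (Fin n) | IsPk n w ∧ Avoids312 n w ∧ des n w = k}
      {S : Finset (ℕ × ℕ) | S.card = k ∧
        (∀ p ∈ S, 1 ≤ p.1 ∧ p.1 < p.2 ∧ p.2 ≤ n - 1) ∧
        (∀ p ∈ S, ∀ q ∈ S, p ≠ q → Noncrossing p q)} :=
  descentPairs_bijection_general n k
end

section
/- For every n ≥ 1, the h-polynomial of the associahedron (the Narayana polynomial) satisfies Σ_{w ∈ S_n(312)} t^{des(w)} = Σ_{w ∈ Pk_n(312)} t^{des(w)} (1+t)^{n−1−2·des(w)} as polynomials in t. Consequently the γ-vector of the simplicial complex dual to the associahedron is given by γ_i = #{w ∈ Pk_n(312) : des(w) = i}, and it is the f-vector of a flag simplicial complex (namely the complex of sets of pairwise noncrossing pairs (a,b) with 1 ≤ a < b ≤ n−1); in particular it satisfies the Kruskal–Katona inequalities. -/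
open Polynomial Finset

attribute [local instance] Classical.propDecidable

/-!
Splitting a 312-avoiding permutation at its letter `1` writes it as `glue u v`: a 312-avoiding
permutation `u` of `{2, …, a+1}`, then `1`, then a 312-avoiding permutation `v` of
`{a+2, …, n}`. Descents add up, plus one when `u ≠ []`, and `glue u v ∈ Pk` iff `u, v ∈ Pk` and
`v ≠ []` unless `u = []`. So the descent polynomials `L n` of `S_n(312)`, the sums `G n` on the
right-hand side and the descent polynomials `P n` of `Pk_n(312)` obey quadratic recurrences in
`n`; since `2 des w ≤ n - 1` on `Pk_n`, `L` and `G` obey the same one and agree. Deleting the arc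
that ends at `m + 1` splits a noncrossing arc set on `[1, m+1]` into arc sets on `[1, a]` and on
`[a+2, m]`, so the face polynomial of the arc complex on `[1, n-1]` obeys the recurrence of `P n`,
which identifies `γ_i` with the number of its faces of size `i`.
-/

/-! Words are lists `w_1 ⋯ w_n` of naturals; `wordVal l i = w_i`, with `w_0 = 0` and `w_i = 0`
past the end, exactly as for `pval`. -/

def wordVal (l : List ℕ) (i : ℕ) : ℕ := (0 :: l).getD i 0

def wordDesSet (l : List ℕ) : Finset ℕ :=
  (Icc 1 (l.length - 1)).filter fun i => wordVal l (i + 1) < wordVal l i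

def wordDes (l : List ℕ) : ℕ := (wordDesSet l).card

def IsDoubleDescent (l : List ℕ) (i : ℕ) : Prop :=
  wordVal l i < wordVal l (i - 1) ∧ wordVal l (i + 1) < wordVal l i

def NoDoubleDescent (l : List ℕ) : Prop := ∀ i ∈ Icc 2 (l.length - 1), ¬IsDoubleDescent l i

def HasFinalDescent (l : List ℕ) : Prop := wordVal l l.length < wordVal l (l.length - 1)

def IsPkWord (l : List ℕ) : Prop := NoDoubleDescent l ∧ ¬HasFinalDescent l

def Avoids312Word (l : List ℕ) : Prop :=
  ∀ i ∈ Icc 1 l.length, ∀ j ∈ Icc 1 l.length, ∀ k ∈ Icc 1 l.length,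
    i < j → j < k → ¬(wordVal l j < wordVal l k ∧ wordVal l k < wordVal l i)

def permWord (n : ℕ) (w : Equiv.Perm (Fin n)) : List ℕ := List.ofFn fun i => (w i : ℕ) + 1

@[simp]
lemma length_permWord (n : ℕ) (w : Equiv.Perm (Fin n)) : (permWord n w).length = n := by
  simp [permWord]

lemma pval_eq_wordVal (n : ℕ) (w : Equiv.Perm (Fin n)) (i : ℕ) :
    pval n w i = wordVal (permWord n w) i := by
  rcases i with _ | i
  · simp [pval, wordVal]
  · by_cases hi : i < n
    · simp [pval, wordVal, permWord, Nat.succ_le_of_lt hi]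
    · simp [pval, wordVal, permWord, hi, List.getD_eq_getElem?_getD]

lemma des_eq_wordDes (n : ℕ) (w : Equiv.Perm (Fin n)) : des n w = wordDes (permWord n w) := by
  simp only [des, desSet, wordDes, wordDesSet, pval_eq_wordVal, length_permWord]

lemma isPk_iff_isPkWord (n : ℕ) (w : Equiv.Perm (Fin n)) :
    IsPk n w ↔ IsPkWord (permWord n w) := by
  simp only [IsPk, IsPkWord, NoDoubleDescent, IsDoubleDescent, HasFinalDescent, pval_eq_wordVal,
    length_permWord]

lemma avoids312_iff_avoids312Word (n : ℕ) (w : Equiv.Perm (Fin n)) :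
    Avoids312 n w ↔ Avoids312Word (permWord n w) := by
  simp only [Avoids312, Avoids312Word, pval_eq_wordVal, length_permWord]

lemma permWord_injective (n : ℕ) : Function.Injective (permWord n) := by
  intro w w' h
  ext i
  simpa [permWord] using congr_fun (List.ofFn_injective h) i

def permWordEmbedding (n : ℕ) : Equiv.Perm (Fin n) ↪ List ℕ := ⟨permWord n, permWord_injective n⟩

@[simp]
lemma permWordEmbedding_apply (n : ℕ) (w : Equiv.Perm (Fin n)) :
    permWordEmbedding n w = permWord n w := rfl

def permWords (n : ℕ) : Finset (List ℕ) := univ.map (permWordEmbedding n)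

lemma exists_permWord {n : ℕ} {l : List ℕ} (hlen : l.length = n) (hnd : l.Nodup)
    (hval : ∀ a ∈ l, 1 ≤ a ∧ a ≤ n) : ∃ w, permWord n w = l := by
  have hval' (i : Fin n) : 1 ≤ l[i.1] ∧ l[i.1] ≤ n := hval _ (List.getElem_mem _)
  let f : Fin n → Fin n := fun i => ⟨l[i.1] - 1, by have := hval' i; omega⟩
  have hf : Function.Injective f := by
    intro i j h
    have := hval' i; have := hval' j
    exact Fin.ext (hnd.getElem_inj_iff.mp (by simp [f, Fin.ext_iff] at h; omega))
  refine ⟨Equiv.ofBijective f hf.bijective_of_finite, List.ext_getElem (by simp [hlen]) ?_⟩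
  intro i _ hi
  have := hval _ (List.getElem_mem hi)
  simp only [permWord, List.getElem_ofFn, Equiv.ofBijective_apply, f]
  omega

lemma mem_permWords {n : ℕ} {l : List ℕ} :
    l ∈ permWords n ↔ l.length = n ∧ l.Nodup ∧ ∀ a ∈ l, 1 ≤ a ∧ a ≤ n := by
  constructor
  · simp only [permWords, mem_map, mem_univ, true_and, permWordEmbedding_apply]
    rintro ⟨w, rfl⟩
    refine ⟨length_permWord n w, ?_, ?_⟩
    · exact List.nodup_ofFn.mpr fun i j h => w.injective (Fin.ext (by simpa using h))
    · simp only [permWord, List.mem_ofFn, forall_exists_index]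
      rintro _ i rfl
      exact ⟨by omega, (w i).isLt⟩
  · rintro ⟨hlen, hnd, hval⟩
    obtain ⟨w, rfl⟩ := exists_permWord hlen hnd hval
    exact mem_map_of_mem _ (mem_univ w)

lemma bounds_of_mem_permWords {n : ℕ} {l : List ℕ} (hl : l ∈ permWords n) :
    ∀ a ∈ l, 1 ≤ a ∧ a ≤ l.length := by
  obtain ⟨rfl, -, hval⟩ := mem_permWords.mp hl
  exact hval

@[simp]
lemma wordVal_zero (l : List ℕ) : wordVal l 0 = 0 := rfl

lemma wordVal_mem {l : List ℕ} {i : ℕ} (h1 : 1 ≤ i) (h2 : i ≤ l.length) : wordVal l i ∈ l := by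
  obtain ⟨i, rfl⟩ : ∃ j, i = j + 1 := ⟨i - 1, by omega⟩
  simp [wordVal, List.getD_eq_getElem?_getD, List.getElem?_eq_getElem (by omega : i < l.length)]

lemma wordVal_map (f : ℕ → ℕ) {l : List ℕ} {i : ℕ} (h1 : 1 ≤ i) (h2 : i ≤ l.length) :
    wordVal (l.map f) i = f (wordVal l i) := by
  obtain ⟨i, rfl⟩ : ∃ j, i = j + 1 := ⟨i - 1, by omega⟩
  simp [wordVal, List.getD_eq_getElem?_getD, List.getElem?_eq_getElem (by omega : i < l.length)]

lemma wordVal_append_cons_of_le {x y : List ℕ} {c i : ℕ} (h : i ≤ x.length) :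
    wordVal (x ++ c :: y) i = wordVal x i := by
  rcases i with _ | i
  · rfl
  · simp [wordVal, List.getD_eq_getElem?_getD, List.getElem?_append_left (by omega : i < x.length)]

lemma wordVal_append_cons_length (x y : List ℕ) (c : ℕ) :
    wordVal (x ++ c :: y) (x.length + 1) = c := by
  simp [wordVal]

lemma wordVal_append_cons_of_lt {x y : List ℕ} {c i : ℕ} (h : x.length + 1 < i) :
    wordVal (x ++ c :: y) i = wordVal y (i - x.length - 1) := by
  obtain ⟨j, rfl⟩ : ∃ j, i = x.length + j + 2 := ⟨i - x.length - 2, by omega⟩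
  simp [wordVal, List.getD_eq_getElem?_getD, show x.length + j + 2 - x.length - 1 = j + 1 by omega,
    List.getElem?_append_right (by omega : x.length ≤ x.length + j + 1),
    show x.length + j + 1 - x.length = j + 1 by omega]

lemma mem_wordDesSet {l : List ℕ} {i : ℕ} :
    i ∈ wordDesSet l ↔ 1 ≤ i ∧ i < l.length ∧ wordVal l (i + 1) < wordVal l i := by
  simp only [wordDesSet, mem_filter, mem_Icc]
  omega

lemma wordDes_nil : wordDes [] = 0 := rfl

lemma not_hasFinalDescent_of_length_le_one {l : List ℕ} (h : l.length ≤ 1) :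
    ¬HasFinalDescent l := by
  rw [HasFinalDescent, show l.length - 1 = 0 by omega, wordVal_zero]
  exact Nat.not_lt_zero _

lemma isPkWord_nil : IsPkWord [] :=
  ⟨fun i hi => by simp at hi, not_hasFinalDescent_of_length_le_one (by simp)⟩

lemma isPkWord_singleton (a : ℕ) : IsPkWord [a] :=
  ⟨fun i hi => by simp at hi, not_hasFinalDescent_of_length_le_one (by simp)⟩

lemma two_mul_wordDes_le {l : List ℕ} (h : IsPkWord l) : 2 * wordDes l ≤ l.length - 1 := by
  obtain ⟨hdd, hfin⟩ := h
  have hD {i : ℕ} (hi : i ∈ wordDesSet l) :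
      1 ≤ i ∧ i + 1 < l.length ∧ wordVal l (i + 1) < wordVal l i := by
    obtain ⟨h1, h2, h3⟩ := mem_wordDesSet.mp hi
    refine ⟨h1, ?_, h3⟩
    by_contra
    exact hfin (by rwa [HasFinalDescent, show l.length = i + 1 by omega, Nat.add_sub_cancel])
  have hdisj : Disjoint (wordDesSet l) ((wordDesSet l).map (addRightEmbedding 1)) := by
    rw [disjoint_left]
    intro i hi hi'
    obtain ⟨j, hj, rfl⟩ := mem_map.mp hi'
    rw [addRightEmbedding_apply] at hi
    have := hD hi; have := hD hj
    refine hdd (j + 1) (mem_Icc.mpr (by omega)) ⟨?_, ?_⟩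
    · simpa using (hD hj).2.2
    · exact (hD hi).2.2
  have hsub : wordDesSet l ∪ (wordDesSet l).map (addRightEmbedding 1) ⊆ Icc 1 (l.length - 1) := by
    intro i hi
    rw [mem_Icc]
    rcases mem_union.mp hi with hi | hi
    · have := hD hi; omega
    · obtain ⟨j, hj, rfl⟩ := mem_map.mp hi
      have := hD hj; simp only [addRightEmbedding_apply]; omega
  have := card_le_card hsub
  rw [card_union_of_disjoint hdisj, card_map, Nat.card_Icc] at this
  rw [wordDes]
  omega

lemma length_sub_le_of_forall_mem {x : List ℕ} {c d : ℕ} (h : ∀ e, c ≤ e → e ≤ d → e ∈ x) :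
    d + 1 - c ≤ x.length := by
  calc d + 1 - c = #(Icc c d) := (Nat.card_Icc c d).symm
    _ ≤ #x.toFinset := card_le_card fun e he => by
        rw [mem_Icc] at he; exact List.mem_toFinset.mpr (h e he.1 he.2)
    _ ≤ x.length := List.toFinset_card_le x

lemma not_lt_lt_of_avoids312Word_append_one {x y : List ℕ} (h : Avoids312Word (x ++ 1 :: y))
    {a b : ℕ} (ha : a ∈ x) (hb : b ∈ y) : ¬(1 < b ∧ b < a) := by
  obtain ⟨i, hi, rfl⟩ := List.mem_iff_getElem.mp ha
  obtain ⟨k, hk, rfl⟩ := List.mem_iff_getElem.mp hb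
  have hlen : (x ++ 1 :: y).length = x.length + y.length + 1 := by simp; omega
  have hvi : wordVal (x ++ 1 :: y) (i + 1) = x[i] := by
    rw [wordVal_append_cons_of_le (by omega)]; simp [wordVal, hi]
  have hvk : wordVal (x ++ 1 :: y) (x.length + k + 2) = y[k] := by
    rw [wordVal_append_cons_of_lt (by omega), show x.length + k + 2 - x.length - 1 = k + 1 by omega]
    simp [wordVal, hk]
  have := h (i + 1) (by simp only [mem_Icc]; omega) (x.length + 1) (by simp only [mem_Icc]; omega)
    (x.length + k + 2) (by simp only [mem_Icc]; omega) (by omega) (by omega)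
  rwa [hvi, hvk, wordVal_append_cons_length] at this

section Window

/-! `l` sits in `g` as a window at offset `s` when `g_{s+i} = f (l_i)` for `1 ≤ i ≤ |l|` with `f`
strictly monotone; the pattern statistics of `l` can then be read off `g`. -/

variable {g l : List ℕ} {s : ℕ} {f : ℕ → ℕ}

lemma avoids312Word_of_window (hf : StrictMono f) (hlen : s + l.length ≤ g.length)
    (hval : ∀ i, 1 ≤ i → i ≤ l.length → wordVal g (s + i) = f (wordVal l i))
    (hg : Avoids312Word g) : Avoids312Word l := by
  intro i hi j hj k hk hij hjk ⟨hjk', hki⟩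
  simp only [mem_Icc] at hi hj hk
  apply hg (s + i) (by simp only [mem_Icc]; omega) (s + j) (by simp only [mem_Icc]; omega)
    (s + k) (by simp only [mem_Icc]; omega) (by omega) (by omega)
  rw [hval i hi.1 hi.2, hval j hj.1 hj.2, hval k hk.1 hk.2]
  exact ⟨hf hjk', hf hki⟩

lemma isDoubleDescent_add_iff_of_window (hf : StrictMono f)
    (hval : ∀ i, 1 ≤ i → i ≤ l.length → wordVal g (s + i) = f (wordVal l i)) {i : ℕ}
    (hi1 : 2 ≤ i) (hi2 : i < l.length) : IsDoubleDescent g (s + i) ↔ IsDoubleDescent l i := by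
  rw [IsDoubleDescent, IsDoubleDescent, show s + i - 1 = s + (i - 1) by omega,
    show s + i + 1 = s + (i + 1) by omega, hval i (by omega) (by omega),
    hval (i - 1) (by omega) (by omega), hval (i + 1) (by omega) (by omega), hf.lt_iff_lt,
    hf.lt_iff_lt]

lemma add_mem_wordDesSet_iff_of_window (hf : StrictMono f) (hlen : s + l.length ≤ g.length)
    (hval : ∀ i, 1 ≤ i → i ≤ l.length → wordVal g (s + i) = f (wordVal l i)) {i : ℕ}
    (hi1 : 1 ≤ i) (hi2 : i < l.length) : s + i ∈ wordDesSet g ↔ i ∈ wordDesSet l := by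
  simp only [wordDesSet, mem_filter, mem_Icc, show s + i + 1 = s + (i + 1) by omega,
    hval i hi1 hi2.le, hval (i + 1) (by omega) hi2, hf.lt_iff_lt]
  omega

end Window

def glue (u v : List ℕ) : List ℕ := u.map (· + 1) ++ 1 :: v.map (· + (u.length + 1))

lemma length_glue (u v : List ℕ) : (glue u v).length = u.length + v.length + 1 := by
  simp [glue]; omega

lemma wordVal_glue_length (u v : List ℕ) : wordVal (glue u v) (u.length + 1) = 1 := by
  simpa [glue] using wordVal_append_cons_length (u.map (· + 1)) (v.map (· + (u.length + 1))) 1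

lemma glue_inj {u v u' v' : List ℕ} (hu : 0 ∉ u) (hv : 0 ∉ v) (h : glue u v = glue u' v') :
    u = u' ∧ v = v' := by
  have hv1 : 1 ∉ v.map (· + (u.length + 1)) := by
    simp only [List.mem_map, not_exists, not_and]
    intro x hx h1
    obtain rfl : x = 0 := by omega
    exact hv hx
  rw [glue, glue, List.append_cons_inj_of_notMem (by simpa using hu) hv1] at h
  obtain ⟨hu', -, hv'⟩ := h
  have hu' := List.map_injective_iff.mpr (add_left_injective 1) hu'
  subst hu'
  exact ⟨rfl, List.map_injective_iff.mpr (add_left_injective _) hv'⟩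

section Glue

variable {u v : List ℕ} {i : ℕ}

lemma wordVal_glue_of_le (h1 : 1 ≤ i) (h2 : i ≤ u.length) :
    wordVal (glue u v) i = wordVal u i + 1 := by
  rw [glue, wordVal_append_cons_of_le (by simpa using h2), wordVal_map _ h1 h2]

lemma wordVal_glue_of_lt (h1 : u.length + 1 < i) (h2 : i ≤ u.length + v.length + 1) :
    wordVal (glue u v) i = wordVal v (i - u.length - 1) + (u.length + 1) := by
  rw [glue, wordVal_append_cons_of_lt (by simpa using h1), List.length_map,
    wordVal_map _ (by omega) (by omega)]

lemma wordVal_glue_add (v : List ℕ) (h1 : 1 ≤ i) (h2 : i ≤ v.length) :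
    wordVal (glue u v) (u.length + 1 + i) = wordVal v i + (u.length + 1) := by
  rw [wordVal_glue_of_lt (by omega) (by omega)]
  congr 2
  omega

lemma wordVal_mem_Icc (hu : ∀ a ∈ u, 1 ≤ a ∧ a ≤ u.length) (h1 : 1 ≤ i)
    (h2 : i ≤ u.length) : 1 ≤ wordVal u i ∧ wordVal u i ≤ u.length :=
  hu _ (wordVal_mem h1 h2)

lemma wordVal_glue_le (v : List ℕ) (hu : ∀ a ∈ u, 1 ≤ a ∧ a ≤ u.length) (h1 : 1 ≤ i)
    (h2 : i ≤ u.length + 1) : 1 ≤ wordVal (glue u v) i ∧ wordVal (glue u v) i ≤ u.length + 1 := by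
  rcases h2.lt_or_eq with h2 | rfl
  · rw [wordVal_glue_of_le h1 (by omega)]
    have := wordVal_mem_Icc hu h1 (by omega : i ≤ u.length)
    omega
  · rw [wordVal_glue_length]
    omega

lemma lt_wordVal_glue (hv : ∀ a ∈ v, 1 ≤ a ∧ a ≤ v.length) (h1 : u.length + 1 < i)
    (h2 : i ≤ u.length + v.length + 1) : u.length + 1 < wordVal (glue u v) i := by
  rw [wordVal_glue_of_lt h1 h2]
  have := wordVal_mem_Icc hv (i := i - u.length - 1) (by omega) (by omega)
  omega

lemma avoids312Word_glue_iff (hu : ∀ a ∈ u, 1 ≤ a ∧ a ≤ u.length)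
    (hv : ∀ a ∈ v, 1 ≤ a ∧ a ≤ v.length) :
    Avoids312Word (glue u v) ↔ Avoids312Word u ∧ Avoids312Word v := by
  have hlen := length_glue u v
  refine ⟨fun h => ⟨avoids312Word_of_window (s := 0) (strictMono_id.add_const 1) (by omega)
      (fun i h1 h2 => by rw [zero_add]; exact wordVal_glue_of_le h1 h2) h,
    avoids312Word_of_window (strictMono_id.add_const _) (by omega)
      (fun i h1 h2 => wordVal_glue_add v h1 h2) h⟩, ?_⟩
  rintro ⟨hu', hv'⟩ i hi j hj k hk hij hjk ⟨hjk', hki⟩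
  simp only [mem_Icc, hlen] at hi hj hk
  rcases lt_trichotomy k (u.length + 1) with hk' | rfl | hk'
  · rw [wordVal_glue_of_le hi.1 (by omega), wordVal_glue_of_le hj.1 (by omega),
      wordVal_glue_of_le hk.1 (by omega)] at *
    exact hu' i (by simp only [mem_Icc]; omega) j (by simp only [mem_Icc]; omega) k
      (by simp only [mem_Icc]; omega) hij hjk ⟨by omega, by omega⟩
  · have := wordVal_glue_le v hu hj.1 (by omega)
    rw [wordVal_glue_length] at hjk'
    omega
  · have hi' : u.length + 1 < i := by
      by_contra
      have := wordVal_glue_le v hu hi.1 (by omega)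
      have := lt_wordVal_glue hv hk' hk.2
      omega
    obtain ⟨i, rfl⟩ : ∃ i', i = u.length + 1 + i' := ⟨i - u.length - 1, by omega⟩
    obtain ⟨j, rfl⟩ : ∃ j', j = u.length + 1 + j' := ⟨j - u.length - 1, by omega⟩
    obtain ⟨k, rfl⟩ : ∃ k', k = u.length + 1 + k' := ⟨k - u.length - 1, by omega⟩
    rw [wordVal_glue_add v (i := i) (by omega) (by omega),
      wordVal_glue_add v (i := j) (by omega) (by omega),
      wordVal_glue_add v (i := k) (by omega) (by omega)] at *
    exact hv' i (by simp only [mem_Icc]; omega) j (by simp only [mem_Icc]; omega) k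
      (by simp only [mem_Icc]; omega) (by omega) (by omega) ⟨by omega, by omega⟩

lemma wordDesSet_glue (hu : ∀ a ∈ u, 1 ≤ a ∧ a ≤ u.length)
    (hv : ∀ a ∈ v, 1 ≤ a ∧ a ≤ v.length) :
    wordDesSet (glue u v) = (wordDesSet u ∪ if u = [] then ∅ else {u.length}) ∪
      (wordDesSet v).map (addLeftEmbedding (u.length + 1)) := by
  have hlen := length_glue u v
  have hleft {i : ℕ} (h1 : 1 ≤ i) (h2 : i < u.length) :
      i ∈ wordDesSet (glue u v) ↔ i ∈ wordDesSet u := by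
    simpa using add_mem_wordDesSet_iff_of_window (s := 0) (strictMono_id.add_const 1)
      (by omega) (fun i h1 h2 => by rw [zero_add]; exact wordVal_glue_of_le h1 h2) h1 h2
  have hright {i : ℕ} (h1 : 1 ≤ i) (h2 : i < v.length) :=
    add_mem_wordDesSet_iff_of_window (g := glue u v) (strictMono_id.add_const _) (by omega)
      (fun i h1 h2 => wordVal_glue_add v h1 h2) h1 h2
  have hu_range {i : ℕ} (h : i ∈ wordDesSet u) : 1 ≤ i ∧ i < u.length :=
    ⟨(mem_wordDesSet.mp h).1, (mem_wordDesSet.mp h).2.1⟩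
  have hv_range {i : ℕ} (h : i ∈ wordDesSet v) : 1 ≤ i ∧ i < v.length :=
    ⟨(mem_wordDesSet.mp h).1, (mem_wordDesSet.mp h).2.1⟩
  ext x
  simp only [mem_union, mem_map, addLeftEmbedding_apply]
  constructor
  · intro hx
    obtain ⟨h1, h2, hdes⟩ := mem_wordDesSet.mp hx
    rw [hlen] at h2
    rcases lt_trichotomy x u.length with hx' | rfl | hx'
    · exact Or.inl (Or.inl ((hleft h1 hx').mp hx))
    · exact Or.inl (Or.inr (by simp [List.ne_nil_of_length_pos (by omega : 0 < u.length)]))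
    · obtain ⟨y, rfl⟩ : ∃ y, x = u.length + 1 + y := ⟨x - u.length - 1, by omega⟩
      rcases Nat.eq_zero_or_pos y with rfl | hy
      · have := lt_wordVal_glue (u := u) hv (i := u.length + 1 + 1) (by omega) (by omega)
        rw [add_zero, wordVal_glue_length] at hdes
        omega
      · exact Or.inr ⟨y, (hright hy (by omega)).mp hx, rfl⟩
  · rintro ((hx | hx) | ⟨y, hy, rfl⟩)
    · exact (hleft (hu_range hx).1 (hu_range hx).2).mpr hx
    · split_ifs at hx with hu0
      · simp at hx
      · rw [mem_singleton] at hx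
        subst hx
        have hpos : 0 < u.length := List.length_pos_iff.mpr hu0
        have := wordVal_mem_Icc hu (i := u.length) hpos le_rfl
        refine mem_wordDesSet.mpr ⟨hpos, by omega, ?_⟩
        rw [wordVal_glue_length, wordVal_glue_of_le hpos le_rfl]
        omega
    · exact (hright (hv_range hy).1 (hv_range hy).2).mpr hy

lemma wordDes_glue (hu : ∀ a ∈ u, 1 ≤ a ∧ a ≤ u.length) (hv : ∀ a ∈ v, 1 ≤ a ∧ a ≤ v.length) :
    wordDes (glue u v) = wordDes u + wordDes v + if u = [] then 0 else 1 := by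
  have hu_lt {i : ℕ} (h : i ∈ wordDesSet u) : i < u.length := (mem_wordDesSet.mp h).2.1
  rw [wordDes, wordDesSet_glue hu hv, card_union_of_disjoint, card_union_of_disjoint, card_map]
  · split_ifs <;> simp only [card_empty, card_singleton, wordDes] <;> ring
  · split_ifs
    · exact disjoint_empty_right _
    · exact disjoint_singleton_right.mpr fun h => (hu_lt h).false
  · rw [disjoint_left]
    intro x hx hx'
    obtain ⟨y, -, rfl⟩ := mem_map.mp hx'
    split_ifs at hx <;> simp only [mem_union, mem_singleton, notMem_empty, or_false] at hx
    · have := hu_lt hx; simp only [addLeftEmbedding_apply] at this; omega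
    · rcases hx with hx | hx
      · have := hu_lt hx; simp only [addLeftEmbedding_apply] at this; omega
      · simp only [addLeftEmbedding_apply] at hx; omega

lemma wordDes_glue_nil (hv : ∀ a ∈ v, 1 ≤ a ∧ a ≤ v.length) :
    wordDes (glue [] v) = wordDes v := by
  simp [wordDes_glue (u := []) (by simp) hv, wordDes_nil]

lemma wordDes_glue_of_ne_nil (hu : ∀ a ∈ u, 1 ≤ a ∧ a ≤ u.length)
    (hv : ∀ a ∈ v, 1 ≤ a ∧ a ≤ v.length) (h : u ≠ []) :
    wordDes (glue u v) = wordDes u + wordDes v + 1 := by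
  rw [wordDes_glue hu hv, if_neg h]

lemma isDoubleDescent_glue_length (v : List ℕ) (hu : ∀ a ∈ u, 1 ≤ a ∧ a ≤ u.length)
    (h : 2 ≤ u.length) : IsDoubleDescent (glue u v) u.length ↔ HasFinalDescent u := by
  have := wordVal_mem_Icc hu (i := u.length) (by omega) le_rfl
  rw [IsDoubleDescent, HasFinalDescent, wordVal_glue_length, wordVal_glue_of_le (by omega) le_rfl,
    wordVal_glue_of_le (by omega) (by omega)]
  omega

lemma noDoubleDescent_glue_iff (hu : ∀ a ∈ u, 1 ≤ a ∧ a ≤ u.length)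
    (hv : ∀ a ∈ v, 1 ≤ a ∧ a ≤ v.length) :
    NoDoubleDescent (glue u v) ↔
      NoDoubleDescent u ∧ ¬HasFinalDescent u ∧ NoDoubleDescent v := by
  have hlen := length_glue u v
  have hleft {i : ℕ} (h1 : 2 ≤ i) (h2 : i < u.length) :
      IsDoubleDescent (glue u v) i ↔ IsDoubleDescent u i := by
    simpa using isDoubleDescent_add_iff_of_window (s := 0) (strictMono_id.add_const 1)
      (fun i h1 h2 => by rw [zero_add]; exact wordVal_glue_of_le h1 h2) h1 h2
  have hright {i : ℕ} (h1 : 2 ≤ i) (h2 : i < v.length) :=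
    isDoubleDescent_add_iff_of_window (g := glue u v) (strictMono_id.add_const _)
      (fun i h1 h2 => wordVal_glue_add v h1 h2) h1 h2
  constructor
  · intro h
    refine ⟨fun i hi => ?_, fun hfin => ?_, fun i hi => ?_⟩ <;> try simp only [mem_Icc] at hi
    · exact (hleft hi.1 (by omega)).not.mp (h i (by simp only [mem_Icc]; omega))
    · have h2 : 2 ≤ u.length := by
        by_contra; exact not_hasFinalDescent_of_length_le_one (by omega) hfin
      exact h u.length (by simp only [mem_Icc]; omega)
        ((isDoubleDescent_glue_length v hu h2).mpr hfin)
    · exact (hright hi.1 (by omega)).not.mp (h _ (by simp only [mem_Icc]; omega))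
  · rintro ⟨hu', hfin, hv'⟩ i hi hdd
    simp only [mem_Icc, hlen] at hi
    rcases lt_trichotomy i u.length with hi' | rfl | hi'
    · exact hu' i (by simp only [mem_Icc]; omega) ((hleft hi.1 hi').mp hdd)
    · exact hfin ((isDoubleDescent_glue_length v hu hi.1).mp hdd)
    · obtain ⟨j, rfl⟩ : ∃ j, i = u.length + 1 + j := ⟨i - u.length - 1, by omega⟩
      have ⟨hdd1, hdd2⟩ := hdd
      rcases Nat.lt_or_ge j 2 with hj | hj
      · have := lt_wordVal_glue (u := u) hv (i := u.length + 1 + 1) (by omega) (by omega)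
        interval_cases j
        · simp only [add_zero, wordVal_glue_length] at hdd2
          omega
        · rw [show u.length + 1 + 1 - 1 = u.length + 1 by omega, wordVal_glue_length] at hdd1
          omega
      · exact hv' j (by simp only [mem_Icc]; omega) ((hright hj (by omega)).mp hdd)

lemma hasFinalDescent_glue_iff (hu : ∀ a ∈ u, 1 ≤ a ∧ a ≤ u.length)
    (hv : ∀ a ∈ v, 1 ≤ a ∧ a ≤ v.length) :
    HasFinalDescent (glue u v) ↔ if v = [] then u ≠ [] else HasFinalDescent v := by
  rw [HasFinalDescent, length_glue]
  split_ifs with hv0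
  · subst hv0
    rw [List.length_nil, add_zero, Nat.add_sub_cancel, wordVal_glue_length,
      ← List.length_pos_iff]
    rcases Nat.eq_zero_or_pos u.length with h0 | hpos
    · simp [h0]
    · have := wordVal_mem_Icc hu (i := u.length) hpos le_rfl
      rw [wordVal_glue_of_le hpos le_rfl]
      omega
  · have hpos : 0 < v.length := List.length_pos_iff.mpr hv0
    rw [show u.length + v.length + 1 = u.length + 1 + v.length by omega,
      wordVal_glue_add v hpos le_rfl, HasFinalDescent]
    rcases Nat.lt_or_ge v.length 2 with h1 | h2
    · rw [show u.length + 1 + v.length - 1 = u.length + 1 by omega, wordVal_glue_length,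
        show v.length - 1 = 0 by omega, wordVal_zero]
      omega
    · rw [show u.length + 1 + v.length - 1 = u.length + 1 + (v.length - 1) by omega,
        wordVal_glue_add v (by omega) (by omega)]
      omega

lemma isPkWord_glue_iff (hu : ∀ a ∈ u, 1 ≤ a ∧ a ≤ u.length)
    (hv : ∀ a ∈ v, 1 ≤ a ∧ a ≤ v.length) :
    IsPkWord (glue u v) ↔ IsPkWord u ∧ IsPkWord v ∧ (u = [] ∨ v ≠ []) := by
  rw [IsPkWord, IsPkWord, IsPkWord, noDoubleDescent_glue_iff hu hv, hasFinalDescent_glue_iff hu hv]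
  split_ifs with hv0
  · subst hv0
    have := isPkWord_nil
    rw [IsPkWord] at this
    tauto
  · tauto

end Glue

noncomputable def avoiders (n : ℕ) : Finset (List ℕ) := (permWords n).filter Avoids312Word

lemma mem_avoiders {n : ℕ} {l : List ℕ} :
    l ∈ avoiders n ↔ (l.length = n ∧ l.Nodup ∧ ∀ a ∈ l, 1 ≤ a ∧ a ≤ n) ∧ Avoids312Word l := by
  rw [avoiders, mem_filter, mem_permWords]

lemma bounds_of_mem_avoiders {n : ℕ} {l : List ℕ} (hl : l ∈ avoiders n) :
    ∀ a ∈ l, 1 ≤ a ∧ a ≤ l.length :=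
  bounds_of_mem_permWords (mem_filter.mp hl).1

lemma avoiders_zero : avoiders 0 = {[]} := by
  ext l
  rw [mem_avoiders, mem_singleton]
  constructor
  · rintro ⟨⟨hlen, -⟩, -⟩
    exact List.eq_nil_of_length_eq_zero hlen
  · rintro rfl
    exact ⟨⟨rfl, List.nodup_nil, by simp⟩, fun i hi => by simp at hi⟩

lemma avoiders_one : avoiders 1 = {[1]} := by
  ext l
  rw [mem_avoiders, mem_singleton]
  constructor
  · rintro ⟨⟨hlen, -, hval⟩, -⟩
    obtain ⟨a, rfl⟩ := List.length_eq_one_iff.mp hlen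
    have := hval a (List.mem_singleton_self a)
    rw [show a = 1 by omega]
  · rintro rfl
    refine ⟨⟨rfl, List.nodup_singleton 1, by simp⟩, fun i hi j hj k hk hij hjk => ?_⟩
    simp only [List.length_singleton, mem_Icc] at hi hj hk
    omega

lemma ne_nil_of_mem_avoiders_succ {n : ℕ} {l : List ℕ} (hl : l ∈ avoiders (n + 1)) : l ≠ [] := by
  rintro rfl
  simpa using (mem_avoiders.mp hl).1.1

lemma map_filter_avoids312 (n : ℕ) (P : List ℕ → Prop) :
    (univ.filter fun w => Avoids312 n w ∧ P (permWord n w)).map (permWordEmbedding n) =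
      (avoiders n).filter P := by
  rw [avoiders, permWords, filter_filter, filter_map]
  congr 1
  exact filter_congr fun w _ => by simp [avoids312_iff_avoids312Word]

lemma glue_mem_avoiders {a b : ℕ} {u v : List ℕ} (hu : u ∈ avoiders a) (hv : v ∈ avoiders b) :
    glue u v ∈ avoiders (a + b + 1) := by
  have hbu := bounds_of_mem_avoiders hu
  have hbv := bounds_of_mem_avoiders hv
  obtain ⟨⟨rfl, hund, -⟩, hua⟩ := mem_avoiders.mp hu
  obtain ⟨⟨rfl, hvnd, -⟩, hva⟩ := mem_avoiders.mp hv
  refine mem_avoiders.mpr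
    ⟨⟨length_glue u v, ?_, ?_⟩, (avoids312Word_glue_iff hbu hbv).mpr ⟨hua, hva⟩⟩
  · simp only [glue, List.nodup_append, List.nodup_cons, List.mem_map, List.mem_cons]
    refine ⟨hund.map (add_left_injective 1), ⟨?_, hvnd.map (add_left_injective _)⟩, ?_⟩
    · rintro ⟨x, hx, hx1⟩
      have := hbv x hx; omega
    · rintro _ ⟨x, hx, rfl⟩ _ (rfl | ⟨y, hy, rfl⟩) <;> have := hbu x hx
      · omega
      · have := hbv y hy; omega
  · simp only [glue, List.mem_append, List.mem_map, List.mem_cons]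
    rintro _ (⟨x, hx, rfl⟩ | rfl | ⟨y, hy, rfl⟩)
    · have := hbu x hx; omega
    · omega
    · have := hbv y hy; omega

lemma map_sub_mem_permWords {x : List ℕ} {c : ℕ} (hnd : x.Nodup)
    (h : ∀ a ∈ x, c < a ∧ a ≤ c + x.length) : x.map (· - c) ∈ permWords x.length := by
  refine mem_permWords.mpr ⟨List.length_map _, hnd.map_on fun a ha b hb hab => ?_, ?_⟩
  · have := h a ha; have := h b hb; omega
  · simp only [List.mem_map]
    rintro _ ⟨a, ha, rfl⟩
    have := h a ha; omega

lemma glue_map_sub {x y : List ℕ} (hx : ∀ a ∈ x, 2 ≤ a) (hy : ∀ b ∈ y, x.length + 2 ≤ b) :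
    glue (x.map (· - 1)) (y.map (· - (x.length + 1))) = x ++ 1 :: y := by
  simp only [glue, List.map_map, List.length_map]
  congr 1
  · exact List.map_congr_left (fun a ha => by have := hx a ha; simp; omega) |>.trans (List.map_id x)
  · congr 1
    exact List.map_congr_left (fun b hb => by have := hy b hb; simp; omega) |>.trans
      (List.map_id y)

lemma mem_of_mem_permWords {n c : ℕ} {l : List ℕ} (hl : l ∈ permWords n) (h1 : 1 ≤ c)
    (h2 : c ≤ n) : c ∈ l := by
  obtain ⟨hlen, hnd, hval⟩ := mem_permWords.mp hl
  have : l.toFinset = Icc 1 n := eq_of_subset_of_card_le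
    (fun a ha => mem_Icc.mpr (hval a (List.mem_toFinset.mp ha)))
    (by rw [Nat.card_Icc, List.toFinset_card_of_nodup hnd, hlen]; omega)
  rw [← List.mem_toFinset, this, mem_Icc]
  exact ⟨h1, h2⟩

lemma bounds_of_append_one_mem_avoiders {n : ℕ} {x y : List ℕ} (hl : x ++ 1 :: y ∈ avoiders n) :
    (∀ a ∈ x, 2 ≤ a ∧ a ≤ x.length + 1) ∧ ∀ b ∈ y, x.length + 2 ≤ b ∧ b ≤ n := by
  obtain ⟨⟨hlen, hnd, hval⟩, hav⟩ := mem_avoiders.mp hl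
  have hmem {c : ℕ} (h1 : 1 ≤ c) (h2 : c ≤ n) : c ∈ x ++ 1 :: y :=
    mem_of_mem_permWords (mem_filter.mp hl).1 h1 h2
  simp only [List.nodup_append, List.nodup_cons, List.mem_cons] at hnd
  obtain ⟨-, ⟨h1y, -⟩, hdisj⟩ := hnd
  have hlen' : x.length + y.length + 1 = n := by simp at hlen; omega
  have hx1 : ∀ a ∈ x, 2 ≤ a := fun a ha => by
    have := hval a (by simp [ha]); have := hdisj a ha 1 (Or.inl rfl); omega
  have hy1 : ∀ b ∈ y, 2 ≤ b := fun b hb => by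
    have := hval b (by simp [hb]); have : b ≠ 1 := fun h => h1y (h ▸ hb); omega
  have hxy : ∀ a ∈ x, ∀ b ∈ y, a < b := fun a ha b hb => by
    have := not_lt_lt_of_avoids312Word_append_one hav ha hb
    have := hdisj a ha b (Or.inr hb); have := hy1 b hb; omega
  -- Both bounds count an interval of values that `x` (resp. `y`) must contain.
  refine ⟨fun a ha => ⟨hx1 a ha, ?_⟩, fun b hb => ⟨?_, (hval b (by simp [hb])).2⟩⟩
  · have := hval a (by simp [ha])
    have : a + 1 - 2 ≤ x.length := length_sub_le_of_forall_mem fun e he1 he2 => by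
      rcases List.mem_append.mp (hmem (c := e) (by omega) (by omega)) with h | h
      · exact h
      · rcases List.mem_cons.mp h with rfl | h
        · omega
        · have := hxy a ha e h; omega
    omega
  · have := hy1 b hb
    have : n + 1 - b ≤ y.length := length_sub_le_of_forall_mem fun e he1 he2 => by
      rcases List.mem_append.mp (hmem (c := e) (by omega) he2) with h | h
      · have := hxy e h b hb; omega
      · rcases List.mem_cons.mp h with rfl | h
        · omega
        · exact h
    omega

lemma exists_glue_eq_of_mem_avoiders {n : ℕ} {l : List ℕ} (hl : l ∈ avoiders (n + 1)) :
    ∃ u v, u ∈ avoiders u.length ∧ v ∈ avoiders v.length ∧ glue u v = l := by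
  obtain ⟨x, y, rfl⟩ := List.append_of_mem (mem_of_mem_permWords (mem_filter.mp hl).1 le_rfl
    (by omega : 1 ≤ n + 1))
  obtain ⟨hxb, hyb⟩ := bounds_of_append_one_mem_avoiders hl
  obtain ⟨⟨hlen, hnd, -⟩, hav⟩ := mem_avoiders.mp hl
  simp only [List.nodup_append, List.nodup_cons] at hnd
  have hlen' : x.length + y.length = n := by simp at hlen; omega
  have heq := glue_map_sub (fun a ha => (hxb a ha).1) (fun b hb => (hyb b hb).1)
  have hu := map_sub_mem_permWords (c := 1) hnd.1 fun a ha => by have := hxb a ha; omega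
  have hv := map_sub_mem_permWords (c := x.length + 1) hnd.2.1.2 fun b hb => by
    have := hyb b hb; omega
  rw [← heq, avoids312Word_glue_iff (bounds_of_mem_permWords hu) (bounds_of_mem_permWords hv)]
    at hav
  exact ⟨_, _, mem_filter.mpr ⟨by simpa using hu, hav.1⟩,
    mem_filter.mpr ⟨by simpa using hv, hav.2⟩, heq⟩

lemma sum_avoiders_succ {M : Type*} [AddCommMonoid M] (n : ℕ) (F : List ℕ → M) :
    ∑ l ∈ avoiders (n + 1), F l =
      ∑ a ∈ range (n + 1), ∑ u ∈ avoiders a, ∑ v ∈ avoiders (n - a), F (glue u v) := by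
  simp_rw [← sum_product', sum_sigma']
  symm
  refine sum_bij (fun x _ => glue x.2.1 x.2.2) ?_ ?_ ?_ fun _ _ => rfl
  · rintro ⟨a, u, v⟩ hx
    simp only [mem_sigma, mem_range, mem_product] at hx
    simpa [show a + (n - a) + 1 = n + 1 by omega] using glue_mem_avoiders hx.2.1 hx.2.2
  · rintro ⟨a, u, v⟩ hx ⟨a', u', v'⟩ hx' h
    simp only [mem_sigma, mem_range, mem_product] at hx hx'
    have h0 (l : List ℕ) {k : ℕ} (hl : l ∈ avoiders k) : 0 ∉ l := fun h0 => by
      have := bounds_of_mem_avoiders hl 0 h0; omega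
    obtain ⟨rfl, rfl⟩ := glue_inj (h0 u hx.2.1) (h0 v hx.2.2) h
    obtain ⟨⟨rfl, -⟩, -⟩ := mem_avoiders.mp hx.2.1
    obtain ⟨⟨h, -⟩, -⟩ := mem_avoiders.mp hx'.2.1
    subst h
    rfl
  · intro l hl
    obtain ⟨u, v, hu, hv, rfl⟩ := exists_glue_eq_of_mem_avoiders hl
    have hlen := (mem_permWords.mp (mem_filter.mp hl).1).1
    rw [length_glue] at hlen
    refine ⟨⟨u.length, u, v⟩, ?_, rfl⟩
    simp only [mem_sigma, mem_range, mem_product]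
    exact ⟨by omega, hu, by rwa [show n - u.length = v.length by omega]⟩

lemma sum_avoiders_succ_succ {M : Type*} [AddCommMonoid M] (n : ℕ) (F : List ℕ → M) :
    ∑ l ∈ avoiders (n + 2), F l = ∑ v ∈ avoiders (n + 1), F (glue [] v) +
      ∑ a ∈ range n, ∑ u ∈ avoiders (a + 1), ∑ v ∈ avoiders (n - a), F (glue u v) +
      ∑ u ∈ avoiders (n + 1), F (glue u []) := by
  rw [sum_avoiders_succ, sum_range_succ, sum_range_succ', Nat.sub_self, avoiders_zero]
  simp only [sum_singleton, Nat.sub_zero, add_comm (∑ _ ∈ range n, _), Nat.add_sub_add_right]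

lemma sum_filter_isPkWord_avoiders_succ_succ {M : Type*} [AddCommMonoid M] (n : ℕ)
    (F : List ℕ → M) :
    ∑ l ∈ (avoiders (n + 2)).filter IsPkWord, F l =
      ∑ v ∈ (avoiders (n + 1)).filter IsPkWord, F (glue [] v) +
      ∑ a ∈ range n, ∑ u ∈ (avoiders (a + 1)).filter IsPkWord,
        ∑ v ∈ (avoiders (n - a)).filter IsPkWord, F (glue u v) := by
  have hbnd {k : ℕ} {l : List ℕ} (hl : l ∈ avoiders k) := bounds_of_mem_avoiders hl
  have hlen {k : ℕ} {l : List ℕ} (hl : l ∈ avoiders k) : l.length = k :=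
    (mem_avoiders.mp hl).1.1
  have hnil : ∀ u ∈ avoiders (n + 1), ¬IsPkWord (glue u []) := fun u hu => by
    rw [isPkWord_glue_iff (hbnd hu) (by simp)]
    rintro ⟨-, -, rfl | h⟩
    · simpa using hlen hu
    · exact h rfl
  rw [sum_filter, sum_avoiders_succ_succ, sum_eq_zero fun u hu => if_neg (hnil u hu), add_zero]
  congr 1
  · rw [sum_filter]
    refine sum_congr rfl fun v hv => if_congr ?_ rfl rfl
    simp [isPkWord_glue_iff (u := []) (by simp) (hbnd hv), isPkWord_nil]
  · refine sum_congr rfl fun a ha => ?_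
    have hpk : ∀ u ∈ avoiders (a + 1), ∀ v ∈ avoiders (n - a),
        IsPkWord (glue u v) ↔ IsPkWord u ∧ IsPkWord v := fun u hu v hv => by
      have hv0 : 0 < v.length := by rw [hlen hv]; simp only [mem_range] at ha; omega
      rw [isPkWord_glue_iff (hbnd hu) (hbnd hv), ← List.length_pos_iff]
      tauto
    rw [sum_congr rfl fun u hu => sum_congr rfl fun v hv => if_congr (hpk u hu v hv) rfl rfl]
    simp only [sum_filter, ite_and, sum_ite_irrel, sum_const_zero]

lemma eq_of_quadratic_recurrence {A : Type*} [Semiring A] (c d : A) {s t : ℕ → A}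
    (h1 : s 1 = t 1)
    (hs : ∀ n, s (n + 2) = c * s (n + 1) + d * ∑ a ∈ range n, s (a + 1) * s (n - a))
    (ht : ∀ n, t (n + 2) = c * t (n + 1) + d * ∑ a ∈ range n, t (a + 1) * t (n - a)) (k : ℕ) :
    s (k + 1) = t (k + 1) := by
  induction k using Nat.strong_induction_on with
  | _ k ih =>
    rcases k with _ | n
    · exact h1
    · rw [hs, ht, ih n (by omega)]
      congr 2
      refine sum_congr rfl fun a ha => ?_
      rw [mem_range] at ha
      rw [ih a (by omega), show n - a = n - a - 1 + 1 by omega, ih (n - a - 1) (by omega)]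

section Polynomials

variable (R : Type*) [CommSemiring R]

lemma coeff_sum_X_pow {α : Type*} (s : Finset α) (f : α → ℕ) (i : ℕ) :
    (∑ x ∈ s, (X : R[X]) ^ f x).coeff i = #(s.filter fun x => f x = i) := by
  simp [coeff_X_pow, eq_comm]

noncomputable def narayanaPoly (n : ℕ) : R[X] := ∑ l ∈ avoiders n, X ^ wordDes l

noncomputable def peakPoly (n : ℕ) : R[X] := ∑ l ∈ (avoiders n).filter IsPkWord, X ^ wordDes l

noncomputable def gammaPoly (n : ℕ) : R[X] :=
  ∑ l ∈ (avoiders n).filter IsPkWord, X ^ wordDes l * (1 + X) ^ (n - 1 - 2 * wordDes l)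

lemma narayanaPoly_succ_succ (n : ℕ) :
    narayanaPoly R (n + 2) = (1 + X) * narayanaPoly R (n + 1) +
      X * ∑ a ∈ range n, narayanaPoly R (a + 1) * narayanaPoly R (n - a) := by
  have hleft : ∑ v ∈ avoiders (n + 1), (X : R[X]) ^ wordDes (glue [] v) =
      narayanaPoly R (n + 1) :=
    sum_congr rfl fun v hv => by rw [wordDes_glue_nil (bounds_of_mem_avoiders hv)]
  have hmid : ∀ a ∈ range n, ∑ u ∈ avoiders (a + 1), ∑ v ∈ avoiders (n - a),
      (X : R[X]) ^ wordDes (glue u v) = X * (narayanaPoly R (a + 1) * narayanaPoly R (n - a)) := by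
    intro a _
    rw [narayanaPoly, narayanaPoly, sum_mul_sum, mul_sum]
    refine sum_congr rfl fun u hu => ?_
    rw [mul_sum]
    refine sum_congr rfl fun v hv => ?_
    rw [wordDes_glue_of_ne_nil (bounds_of_mem_avoiders hu) (bounds_of_mem_avoiders hv)
      (ne_nil_of_mem_avoiders_succ hu), pow_succ, pow_add]
    ring
  have hright : ∑ u ∈ avoiders (n + 1), (X : R[X]) ^ wordDes (glue u []) =
      X * narayanaPoly R (n + 1) := by
    rw [narayanaPoly, mul_sum]
    refine sum_congr rfl fun u hu => ?_
    rw [wordDes_glue_of_ne_nil (bounds_of_mem_avoiders hu) (by simp)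
      (ne_nil_of_mem_avoiders_succ hu), wordDes_nil, add_zero, pow_succ, mul_comm]
  rw [narayanaPoly, sum_avoiders_succ_succ, hleft, sum_congr rfl hmid, hright, ← mul_sum]
  ring

lemma peakPoly_succ_succ (n : ℕ) :
    peakPoly R (n + 2) = peakPoly R (n + 1) +
      X * ∑ a ∈ range n, peakPoly R (a + 1) * peakPoly R (n - a) := by
  have hmid : ∀ a ∈ range n, ∑ u ∈ (avoiders (a + 1)).filter IsPkWord,
      ∑ v ∈ (avoiders (n - a)).filter IsPkWord, (X : R[X]) ^ wordDes (glue u v) =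
        X * (peakPoly R (a + 1) * peakPoly R (n - a)) := by
    intro a _
    rw [peakPoly, peakPoly, sum_mul_sum, mul_sum]
    refine sum_congr rfl fun u hu => ?_
    rw [mul_sum]
    refine sum_congr rfl fun v hv => ?_
    have hu := (mem_filter.mp hu).1
    rw [wordDes_glue_of_ne_nil (bounds_of_mem_avoiders hu)
      (bounds_of_mem_avoiders (mem_filter.mp hv).1) (ne_nil_of_mem_avoiders_succ hu),
      pow_succ, pow_add]
    ring
  rw [peakPoly, sum_filter_isPkWord_avoiders_succ_succ, sum_congr rfl hmid, ← mul_sum]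
  congr 1
  exact sum_congr rfl fun v hv =>
    by rw [wordDes_glue_nil (bounds_of_mem_avoiders (mem_filter.mp hv).1)]

lemma gammaPoly_succ_succ (n : ℕ) :
    gammaPoly R (n + 2) = (1 + X) * gammaPoly R (n + 1) +
      X * ∑ a ∈ range n, gammaPoly R (a + 1) * gammaPoly R (n - a) := by
  -- `2 des ≤ length - 1` on `Pk` words keeps the truncated exponents `n - 1 - 2 des` honest.
  have hlen {k : ℕ} {l : List ℕ} (hl : l ∈ (avoiders k).filter IsPkWord) :
      l.length = k ∧ 2 * wordDes l ≤ k - 1 := by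
    obtain ⟨hl, hpk⟩ := mem_filter.mp hl
    have := (mem_avoiders.mp hl).1.1
    exact ⟨this, this ▸ two_mul_wordDes_le hpk⟩
  have hleft : ∑ v ∈ (avoiders (n + 1)).filter IsPkWord,
      (X : R[X]) ^ wordDes (glue [] v) * (1 + X) ^ (n + 2 - 1 - 2 * wordDes (glue [] v)) =
        (1 + X) * gammaPoly R (n + 1) := by
    rw [gammaPoly, mul_sum]
    refine sum_congr rfl fun v hv => ?_
    have := (hlen hv).2
    rw [wordDes_glue_nil (bounds_of_mem_avoiders (mem_filter.mp hv).1),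
      show n + 2 - 1 - 2 * wordDes v = n + 1 - 1 - 2 * wordDes v + 1 by omega, pow_succ]
    ring
  have hmid : ∀ a ∈ range n, ∑ u ∈ (avoiders (a + 1)).filter IsPkWord,
      ∑ v ∈ (avoiders (n - a)).filter IsPkWord,
        (X : R[X]) ^ wordDes (glue u v) * (1 + X) ^ (n + 2 - 1 - 2 * wordDes (glue u v)) =
        X * (gammaPoly R (a + 1) * gammaPoly R (n - a)) := by
    intro a ha
    rw [mem_range] at ha
    rw [gammaPoly, gammaPoly, sum_mul_sum, mul_sum]
    refine sum_congr rfl fun u hu => ?_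
    rw [mul_sum]
    refine sum_congr rfl fun v hv => ?_
    have := (hlen hu).2; have := (hlen hv).2
    rw [wordDes_glue_of_ne_nil (bounds_of_mem_avoiders (mem_filter.mp hu).1)
      (bounds_of_mem_avoiders (mem_filter.mp hv).1)
      (ne_nil_of_mem_avoiders_succ (mem_filter.mp hu).1),
      show n + 2 - 1 - 2 * (wordDes u + wordDes v + 1) =
        (a + 1 - 1 - 2 * wordDes u) + (n - a - 1 - 2 * wordDes v) by omega,
      pow_succ, pow_add, pow_add]
    ring
  rw [gammaPoly, sum_filter_isPkWord_avoiders_succ_succ, hleft, sum_congr rfl hmid, ← mul_sum]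

lemma narayanaPoly_eq_gammaPoly (n : ℕ) : narayanaPoly R n = gammaPoly R n := by
  rcases n with _ | k
  · simp [narayanaPoly, gammaPoly, avoiders_zero, filter_singleton, isPkWord_nil, wordDes_nil]
  · refine eq_of_quadratic_recurrence (1 + X) X ?_ (narayanaPoly_succ_succ R)
      (gammaPoly_succ_succ R) k
    simp [narayanaPoly, gammaPoly, avoiders_one, filter_singleton, isPkWord_singleton, wordDes,
      wordDesSet]

end Polynomials

def arcs (m : ℕ) : Finset (ℕ × ℕ) := ((Icc 1 m) ×ˢ (Icc 1 m)).filter fun p => p.1 < p.2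

noncomputable def noncrossingSets (m : ℕ) : Finset (Finset (ℕ × ℕ)) :=
  (arcs m).powerset.filter fun S => ∀ p ∈ S, ∀ q ∈ S, p ≠ q → Noncrossing p q

lemma mem_arcs {m : ℕ} {p : ℕ × ℕ} : p ∈ arcs m ↔ 1 ≤ p.1 ∧ p.1 < p.2 ∧ p.2 ≤ m := by
  simp only [arcs, mem_filter, mem_product, mem_Icc]
  omega

lemma mem_noncrossingSets {m : ℕ} {S : Finset (ℕ × ℕ)} :
    S ∈ noncrossingSets m ↔
      (∀ p ∈ S, 1 ≤ p.1 ∧ p.1 < p.2 ∧ p.2 ≤ m) ∧ ∀ p ∈ S, ∀ q ∈ S, p ≠ q → Noncrossing p q := by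
  simp only [noncrossingSets, mem_filter, mem_powerset, subset_iff, mem_arcs]

lemma noncrossingSets_zero : noncrossingSets 0 = {∅} := by
  ext S
  simp only [mem_noncrossingSets, mem_singleton]
  constructor
  · rintro ⟨hS, -⟩
    exact eq_empty_of_forall_notMem fun p hp => by have := hS p hp; omega
  · rintro rfl
    simp

lemma filter_noncrossingSets_succ (m : ℕ) :
    (noncrossingSets (m + 1)).filter (fun S => ∀ r ∈ S, r.2 ≠ m + 1) = noncrossingSets m := by
  ext S
  simp only [mem_filter, mem_noncrossingSets]
  constructor
  · rintro ⟨⟨hS, hnc⟩, htop⟩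
    exact ⟨fun p hp => by have := hS p hp; have := htop p hp; omega, hnc⟩
  · rintro ⟨hS, hnc⟩
    exact ⟨⟨fun p hp => by have := hS p hp; omega, hnc⟩, fun p hp => by have := hS p hp; omega⟩

def arcShift (c : ℕ) : ℕ × ℕ ↪ ℕ × ℕ := (addLeftEmbedding c).prodMap (addLeftEmbedding c)

@[simp]
lemma arcShift_apply (c : ℕ) (p : ℕ × ℕ) : arcShift c p = (c + p.1, c + p.2) := rfl

lemma noncrossing_arcShift_iff {c : ℕ} {p q : ℕ × ℕ} :
    Noncrossing (arcShift c p) (arcShift c q) ↔ Noncrossing p q := by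
  simp only [Noncrossing, arcShift_apply]
  omega

lemma map_arcShift_image_sub {T : Finset (ℕ × ℕ)} {b : ℕ} (h : ∀ r ∈ T, b ≤ r.1 ∧ b ≤ r.2) :
    (T.image fun r => (r.1 - b, r.2 - b)).map (arcShift b) = T := by
  rw [map_eq_image, image_image]
  conv_rhs => rw [← image_id (s := T)]
  refine image_congr fun r hr => ?_
  have := h r hr
  simp only [Function.comp_apply, arcShift_apply, id]
  ext <;> dsimp only <;> omega

/-- Inserting the arc `(a + 1, m + 1)` over arc sets on `[1, a]` and on `[a + 2, m]`. -/
def joinArcs (a m : ℕ) (S₁ S₂ : Finset (ℕ × ℕ)) : Finset (ℕ × ℕ) :=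
  insert (a + 1, m + 1) (S₁ ∪ S₂.map (arcShift (a + 1)))

section JoinArcs

variable {a m : ℕ} {S₁ S₂ : Finset (ℕ × ℕ)}

lemma mem_joinArcs {r : ℕ × ℕ} : r ∈ joinArcs a m S₁ S₂ ↔
    r = (a + 1, m + 1) ∨ r ∈ S₁ ∨ ∃ q ∈ S₂, (a + 1 + q.1, a + 1 + q.2) = r := by
  simp [joinArcs]

lemma joinArcs_mem_noncrossingSets (ha : a < m) (h₁ : S₁ ∈ noncrossingSets a)
    (h₂ : S₂ ∈ noncrossingSets (m - a - 1)) : joinArcs a m S₁ S₂ ∈ noncrossingSets (m + 1) := by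
  obtain ⟨hb₁, hnc₁⟩ := mem_noncrossingSets.mp h₁
  obtain ⟨hb₂, hnc₂⟩ := mem_noncrossingSets.mp h₂
  refine mem_noncrossingSets.mpr ⟨fun r hr => ?_, fun p hp q hq hpq => ?_⟩
  · rcases mem_joinArcs.mp hr with rfl | hr | ⟨q, hq, rfl⟩
    · dsimp only; omega
    · have := hb₁ r hr; omega
    · have := hb₂ q hq; dsimp only; omega
  · rcases mem_joinArcs.mp hp with rfl | hp₁ | ⟨p, hp₂, rfl⟩ <;>
      rcases mem_joinArcs.mp hq with rfl | hq₁ | ⟨q, hq₂, rfl⟩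
    · exact absurd rfl hpq
    · have := hb₁ q hq₁; simp only [Noncrossing]; omega
    · have := hb₂ q hq₂; simp only [Noncrossing]; omega
    · have := hb₁ p hp₁; simp only [Noncrossing]; omega
    · exact hnc₁ p hp₁ q hq₁ hpq
    · have := hb₁ p hp₁; have := hb₂ q hq₂; simp only [Noncrossing]; omega
    · have := hb₂ p hp₂; simp only [Noncrossing]; omega
    · have := hb₂ p hp₂; have := hb₁ q hq₁; simp only [Noncrossing]; omega
    · exact noncrossing_arcShift_iff.mpr (hnc₂ p hp₂ q hq₂ fun h => hpq (h ▸ rfl))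

lemma card_joinArcs (h₁ : S₁ ∈ noncrossingSets a) (h₂ : S₂ ∈ noncrossingSets (m - a - 1)) :
    #(joinArcs a m S₁ S₂) = #S₁ + #S₂ + 1 := by
  have hb₁ := (mem_noncrossingSets.mp h₁).1
  have hb₂ := (mem_noncrossingSets.mp h₂).1
  rw [joinArcs, card_insert_of_notMem, card_union_of_disjoint, card_map]
  · rw [disjoint_left]
    intro r hr hr'
    obtain ⟨q, hq, rfl⟩ := mem_map.mp hr'
    have h1 := hb₁ _ hr
    have := hb₂ q hq
    simp only [arcShift_apply] at h1
    omega
  · simp only [mem_union, mem_map, arcShift_apply, not_or, not_exists, not_and]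
    refine ⟨fun h => by have := hb₁ _ h; omega, fun q hq h => ?_⟩
    have := hb₂ q hq
    simp only [Prod.mk.injEq] at h
    omega

lemma filter_joinArcs_snd_lt (ha : a < m) (h₁ : S₁ ∈ noncrossingSets a)
    (h₂ : S₂ ∈ noncrossingSets (m - a - 1)) :
    (joinArcs a m S₁ S₂).filter (fun r => r.2 < a + 1) = S₁ := by
  have hb₁ := (mem_noncrossingSets.mp h₁).1
  have hb₂ := (mem_noncrossingSets.mp h₂).1
  ext r
  rw [mem_filter, mem_joinArcs]
  constructor
  · rintro ⟨rfl | hr | ⟨q, -, rfl⟩, hlt⟩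
    · dsimp only at hlt; omega
    · exact hr
    · dsimp only at hlt; omega
  · intro hr
    exact ⟨Or.inr (Or.inl hr), by have := hb₁ r hr; omega⟩

lemma filter_joinArcs_lt_fst (h₁ : S₁ ∈ noncrossingSets a)
    (h₂ : S₂ ∈ noncrossingSets (m - a - 1)) :
    (joinArcs a m S₁ S₂).filter (fun r => a + 1 < r.1) = S₂.map (arcShift (a + 1)) := by
  have hb₁ := (mem_noncrossingSets.mp h₁).1
  have hb₂ := (mem_noncrossingSets.mp h₂).1
  ext r
  simp only [mem_filter, mem_joinArcs, mem_map, arcShift_apply]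
  constructor
  · rintro ⟨rfl | hr | hr, hlt⟩
    · dsimp only at hlt; omega
    · have := hb₁ r hr; omega
    · exact hr
  · rintro ⟨q, hq, rfl⟩
    exact ⟨Or.inr (Or.inr ⟨q, hq, rfl⟩), by have := hb₂ q hq; dsimp only; omega⟩

lemma joinArcs_inj {a' : ℕ} {S₁' S₂' : Finset (ℕ × ℕ)} (ha : a < m) (ha' : a' < m)
    (h₁ : S₁ ∈ noncrossingSets a) (h₂ : S₂ ∈ noncrossingSets (m - a - 1))
    (h₁' : S₁' ∈ noncrossingSets a') (h₂' : S₂' ∈ noncrossingSets (m - a' - 1))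
    (h : joinArcs a m S₁ S₂ = joinArcs a' m S₁' S₂') : a = a' ∧ S₁ = S₁' ∧ S₂ = S₂' := by
  have htop : (a + 1, m + 1) ∈ joinArcs a' m S₁' S₂' := h ▸ mem_insert_self _ _
  obtain rfl : a = a' := by
    rcases mem_joinArcs.mp htop with h | h | ⟨q, hq, h⟩
    · simpa using h
    · have := (mem_noncrossingSets.mp h₁').1 _ h; dsimp only at this; omega
    · have := (mem_noncrossingSets.mp h₂').1 q hq; simp only [Prod.mk.injEq] at h; omega
  refine ⟨rfl, ?_, map_injective (arcShift (a + 1)) ?_⟩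
  · rw [← filter_joinArcs_snd_lt ha h₁ h₂, ← filter_joinArcs_snd_lt ha' h₁' h₂', h]
  · rw [← filter_joinArcs_lt_fst h₁ h₂, ← filter_joinArcs_lt_fst h₁' h₂', h]

lemma exists_joinArcs_eq {S : Finset (ℕ × ℕ)} (hS : S ∈ noncrossingSets (m + 1))
    (htop : ¬∀ r ∈ S, r.2 ≠ m + 1) :
    ∃ a < m, ∃ S₁ ∈ noncrossingSets a, ∃ S₂ ∈ noncrossingSets (m - a - 1),
      joinArcs a m S₁ S₂ = S := by
  obtain ⟨hb, hnc⟩ := mem_noncrossingSets.mp hS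
  push Not at htop
  obtain ⟨⟨b, _⟩, htopS, rfl⟩ := htop
  have hb' := hb _ htopS
  dsimp only at hb'
  have hsplit : ∀ r ∈ S, r ≠ (b, m + 1) → r.2 < b ∨ b < r.1 ∧ r.2 ≤ m := fun r hr hne => by
    have := hnc r hr _ htopS hne
    have := hb r hr
    simp only [Noncrossing] at *
    omega
  have hright : ∀ r ∈ S.filter (fun r => b < r.1), b < r.1 ∧ r.1 < r.2 ∧ r.2 ≤ m :=
    fun r hr => by
      obtain ⟨hr, hlt⟩ := mem_filter.mp hr
      have := hb r hr
      have := hsplit r hr (by rintro rfl; dsimp only at hlt; omega)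
      omega
  refine ⟨b - 1, by omega, S.filter (fun r => r.2 < b), ?_,
    (S.filter (fun r => b < r.1)).image (fun r => (r.1 - b, r.2 - b)), ?_, ?_⟩
  · refine mem_noncrossingSets.mpr ⟨fun r hr => ?_, fun p hp q hq => hnc p (mem_filter.mp hp).1
      q (mem_filter.mp hq).1⟩
    obtain ⟨hr, hlt⟩ := mem_filter.mp hr
    have := hb r hr
    omega
  · refine mem_noncrossingSets.mpr ⟨?_, ?_⟩
    · simp only [mem_image]
      rintro _ ⟨r, hr, rfl⟩
      have := hright r hr
      dsimp only
      omega
    · simp only [mem_image]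
      rintro _ ⟨p, hp, rfl⟩ _ ⟨q, hq, rfl⟩ hpq
      have hp' := hright p hp
      have hq' := hright q hq
      rw [← noncrossing_arcShift_iff (c := b)]
      convert hnc p (mem_filter.mp hp).1 q (mem_filter.mp hq).1 (by rintro rfl; exact hpq rfl)
        using 1 <;> simp only [arcShift_apply] <;> ext <;> dsimp only <;> omega
  · rw [joinArcs, show b - 1 + 1 = b by omega, map_arcShift_image_sub fun r hr => by
      have := hright r hr; omega]
    ext r
    simp only [mem_insert, mem_union, mem_filter]
    constructor
    · rintro (rfl | ⟨hr, -⟩ | ⟨hr, -⟩) <;> assumption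
    · intro hr
      by_cases he : r = (b, m + 1)
      · exact Or.inl he
      · rcases hsplit r hr he with h | h
        · exact Or.inr (Or.inl ⟨hr, h⟩)
        · exact Or.inr (Or.inr ⟨hr, h.1⟩)

lemma sum_noncrossingSets_succ {M : Type*} [AddCommMonoid M] (m : ℕ)
    (F : Finset (ℕ × ℕ) → M) :
    ∑ S ∈ noncrossingSets (m + 1), F S = ∑ S ∈ noncrossingSets m, F S +
      ∑ a ∈ range m, ∑ S₁ ∈ noncrossingSets a, ∑ S₂ ∈ noncrossingSets (m - a - 1),
        F (joinArcs a m S₁ S₂) := by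
  rw [← sum_filter_add_sum_filter_not _ fun S => ∀ r ∈ S, r.2 ≠ m + 1,
    filter_noncrossingSets_succ]
  congr 1
  simp_rw [← sum_product', sum_sigma']
  symm
  refine sum_bij (fun x _ => joinArcs x.1 m x.2.1 x.2.2) ?_ ?_ ?_ fun _ _ => rfl
  · rintro ⟨a, S₁, S₂⟩ hx
    simp only [mem_sigma, mem_range, mem_product] at hx
    refine mem_filter.mpr ⟨joinArcs_mem_noncrossingSets hx.1 hx.2.1 hx.2.2, fun h => ?_⟩
    exact h _ (mem_insert_self _ _) rfl
  · rintro ⟨a, S₁, S₂⟩ hx ⟨a', S₁', S₂'⟩ hx' h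
    simp only [mem_sigma, mem_range, mem_product] at hx hx'
    obtain ⟨rfl, rfl, rfl⟩ := joinArcs_inj hx.1 hx'.1 hx.2.1 hx.2.2 hx'.2.1 hx'.2.2 h
    rfl
  · intro S hS
    obtain ⟨hS, htop⟩ := mem_filter.mp hS
    obtain ⟨a, ha, S₁, h₁, S₂, h₂, rfl⟩ := exists_joinArcs_eq hS htop
    exact ⟨⟨a, S₁, S₂⟩, by simp only [mem_sigma, mem_range, mem_product]; exact ⟨ha, h₁, h₂⟩, rfl⟩

end JoinArcs

section Polynomials

variable (R : Type*) [CommSemiring R]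

noncomputable def noncrossingPoly (m : ℕ) : R[X] := ∑ S ∈ noncrossingSets m, X ^ #S

lemma noncrossingPoly_succ (m : ℕ) :
    noncrossingPoly R (m + 1) = noncrossingPoly R m +
      X * ∑ a ∈ range m, noncrossingPoly R a * noncrossingPoly R (m - a - 1) := by
  rw [noncrossingPoly, sum_noncrossingSets_succ, mul_sum]
  congr 1
  refine sum_congr rfl fun a _ => ?_
  rw [noncrossingPoly, noncrossingPoly, sum_mul_sum, mul_sum]
  refine sum_congr rfl fun S₁ h₁ => ?_
  rw [mul_sum]
  refine sum_congr rfl fun S₂ h₂ => ?_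
  rw [card_joinArcs h₁ h₂, pow_succ, pow_add]
  ring

lemma peakPoly_eq_noncrossingPoly (n : ℕ) : peakPoly R n = noncrossingPoly R (n - 1) := by
  rcases n with _ | k
  · simp [peakPoly, noncrossingPoly, avoiders_zero, filter_singleton, isPkWord_nil, wordDes_nil,
      noncrossingSets_zero]
  · refine eq_of_quadratic_recurrence (t := fun k => noncrossingPoly R (k - 1)) 1 X ?_
      (by simpa using peakPoly_succ_succ R) (fun n => ?_) k
    · simp [peakPoly, noncrossingPoly, avoiders_one, filter_singleton, isPkWord_singleton, wordDes,
        wordDesSet, noncrossingSets_zero]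
    · simpa using noncrossingPoly_succ R n

end Polynomials

theorem associahedron_gamma_general (n : ℕ) :
    ((∑ w ∈ Finset.univ.filter fun w : Equiv.Perm (Fin n) => Avoids312 n w,
        (X : Polynomial ℤ) ^ des n w) =
      ∑ w ∈ Finset.univ.filter
          fun w : Equiv.Perm (Fin n) => Avoids312 n w ∧ IsPk n w,
        (X : Polynomial ℤ) ^ des n w * (1 + X) ^ (n - 1 - 2 * des n w)) ∧
    (∀ i : ℕ,
      (Finset.univ.filter
        fun w : Equiv.Perm (Fin n) => Avoids312 n w ∧ IsPk n w ∧ des n w = i).card =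
      ((((Finset.Icc 1 (n - 1)) ×ˢ (Finset.Icc 1 (n - 1))).filter
          fun p => p.1 < p.2).powerset.filter
        fun S => S.card = i ∧ ∀ p ∈ S, ∀ q ∈ S, p ≠ q → Noncrossing p q).card) := by
  have hAv := map_filter_avoids312 n fun _ => True
  have hPk := map_filter_avoids312 n IsPkWord
  simp only [and_true, filter_true] at hAv
  refine ⟨?_, fun i => ?_⟩
  · calc _ = narayanaPoly ℤ n := by
          rw [narayanaPoly, ← hAv, sum_map]
          simp [des_eq_wordDes]
      _ = gammaPoly ℤ n := narayanaPoly_eq_gammaPoly ℤ n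
      _ = _ := by
          rw [gammaPoly, ← hPk, sum_map]
          simp [des_eq_wordDes, isPk_iff_isPkWord]
  · have hcoeff := congr_arg (coeff · i) (peakPoly_eq_noncrossingPoly ℤ n)
    simp only [peakPoly, noncrossingPoly, coeff_sum_X_pow, Nat.cast_inj] at hcoeff
    calc _ = #(((univ.filter fun w => Avoids312 n w ∧ IsPkWord (permWord n w)).map
            (permWordEmbedding n)).filter fun l => wordDes l = i) := by
          rw [filter_map, card_map]
          congr 1
          ext w
          simp only [mem_filter, mem_univ, true_and, Function.comp_apply, isPk_iff_isPkWord,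
            des_eq_wordDes, and_assoc, permWordEmbedding_apply]
      _ = _ := by rw [hPk, hcoeff]
      _ = _ := by
          congr 1
          ext S
          simp only [noncrossingSets, arcs, mem_filter]
          tauto

/-- The `h`-polynomial of the associahedron (the Narayana polynomial) satisfies
`Σ_{w ∈ S_n(312)} t^{des w} = Σ_{w ∈ Pk_n(312)} t^{des w} (1+t)^{n-1-2 des w}`;
consequently `γ_i = #{w ∈ Pk_n(312) : des w = i}`, and this is the number of faces
of cardinality `i` of the flag simplicial complex of sets of pairwise noncrossing
pairs `(a,b)` with `1 ≤ a < b ≤ n-1` (so the `γ`-vector of the associahedron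
satisfies the Kruskal–Katona inequalities). -/
theorem associahedron_gamma (n : ℕ) (hn : 1 ≤ n) :
    ((∑ w ∈ Finset.univ.filter fun w : Equiv.Perm (Fin n) => Avoids312 n w,
        (X : Polynomial ℤ) ^ des n w) =
      ∑ w ∈ Finset.univ.filter
          fun w : Equiv.Perm (Fin n) => Avoids312 n w ∧ IsPk n w,
        (X : Polynomial ℤ) ^ des n w * (1 + X) ^ (n - 1 - 2 * des n w)) ∧
    (∀ i : ℕ,
      (Finset.univ.filter
        fun w : Equiv.Perm (Fin n) => Avoids312 n w ∧ IsPk n w ∧ des n w = i).card =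
      ((((Finset.Icc 1 (n - 1)) ×ˢ (Finset.Icc 1 (n - 1))).filter
          fun p => p.1 < p.2).powerset.filter
        fun S => S.card = i ∧ ∀ p ∈ S, ∀ q ∈ S, p ≠ q → Noncrossing p q).card) :=
  associahedron_gamma_general n
end

section
/- For every n ≥ 0, the h-polynomial of the cyclohedron admits the γ-expansion Σ_{k=0}^{n} C(n,k)² t^k = Σ_{i=0}^{⌊n/2⌋} (n! / (i! · i! · (n−2i)!)) · t^i (1+t)^{n−2i} as polynomials in t; that is, γ_i(Cyc_n) = n!/(i!·i!·(n−2i)!). -/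
open Polynomial Finset

lemma aux1 (n i : ℕ) (h : 2 * i ≤ n) :
    n.factorial / (i.factorial * i.factorial * (n - 2 * i).factorial) =
      n.choose i * (n - i).choose i := by
  have hi : i ≤ n := by omega
  have hi2 : i ≤ n - i := by omega
  have h1 : n.choose i * i.factorial * (n - i).factorial = n.factorial :=
    Nat.choose_mul_factorial_mul_factorial hi
  have h2 : (n - i).choose i * i.factorial * (n - i - i).factorial = (n - i).factorial :=
    Nat.choose_mul_factorial_mul_factorial hi2
  have hs : n - i - i = n - 2 * i := by omega
  rw [hs] at h2
  apply Nat.div_eq_of_eq_mul_left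
  · positivity
  · rw [← h1, ← h2]; ring

lemma aux2 (n k i : ℕ) (hk : k ≤ n) (h2i : 2 * i ≤ n) (hik : i ≤ k) :
    n.choose i * (n - i).choose i * (n - 2 * i).choose (k - i) =
      n.choose k * (k.choose i * (n - k).choose i) := by
  by_cases hkn : k ≤ n - i
  · have e1 : n - 2 * i - (k - i) = n - k - i := by omega
    have h3 : (n - 2 * i).choose (k - i) * (k - i).factorial * (n - k - i).factorial
        = (n - 2 * i).factorial := by
      have := Nat.choose_mul_factorial_mul_factorial (n := n - 2 * i) (k := k - i) (by omega)
      rwa [e1] at this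
    have h4 : (n - i).choose i * i.factorial * (n - 2 * i).factorial = (n - i).factorial := by
      have := Nat.choose_mul_factorial_mul_factorial (n := n - i) (k := i) (by omega)
      rwa [show n - i - i = n - 2 * i by omega] at this
    have h5 : n.choose i * i.factorial * (n - i).factorial = n.factorial :=
      Nat.choose_mul_factorial_mul_factorial (by omega)
    have h6 : k.choose i * i.factorial * (k - i).factorial = k.factorial :=
      Nat.choose_mul_factorial_mul_factorial hik
    have h7 : (n - k).choose i * i.factorial * (n - k - i).factorial = (n - k).factorial :=
      Nat.choose_mul_factorial_mul_factorial (by omega)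
    have h8 : n.choose k * k.factorial * (n - k).factorial = n.factorial :=
      Nat.choose_mul_factorial_mul_factorial hk
    have hD : 0 < i.factorial * i.factorial * (k - i).factorial * (n - k - i).factorial :=
      by positivity
    apply Nat.eq_of_mul_eq_mul_right hD
    calc n.choose i * (n - i).choose i * (n - 2 * i).choose (k - i) *
          (i.factorial * i.factorial * (k - i).factorial * (n - k - i).factorial)
        = (n.choose i * i.factorial) * ((n - i).choose i * i.factorial) *
            ((n - 2 * i).choose (k - i) * (k - i).factorial * (n - k - i).factorial) := by ring
      _ = (n.choose i * i.factorial) * ((n - i).choose i * i.factorial * (n - 2 * i).factorial)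
          := by rw [h3]; ring
      _ = n.choose i * i.factorial * (n - i).factorial := by rw [h4]
      _ = n.factorial := h5
      _ = n.choose k * k.factorial * (n - k).factorial := h8.symm
      _ = n.choose k * (k.choose i * i.factorial * (k - i).factorial) *
            ((n - k).choose i * i.factorial * (n - k - i).factorial) := by rw [h6, h7]
      _ = n.choose k * (k.choose i * (n - k).choose i) *
          (i.factorial * i.factorial * (k - i).factorial * (n - k - i).factorial) := by ring
  · have l1 : (n - 2 * i).choose (k - i) = 0 := Nat.choose_eq_zero_of_lt (by omega)
    have l2 : (n - k).choose i = 0 := Nat.choose_eq_zero_of_lt (by omega)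
    rw [l1, l2]; ring

lemma vander (n k : ℕ) (hk : k ≤ n) :
    ∑ i ∈ Finset.range (n / 2 + 1), k.choose i * (n - k).choose i = n.choose k := by
  have key : ∑ i ∈ Finset.range (n + 1), k.choose i * (n - k).choose i = n.choose k := by
    have h0 : n.choose k = (k + (n - k)).choose k := by rw [Nat.add_sub_cancel' hk]
    rw [h0, Nat.add_choose_eq, Finset.Nat.sum_antidiagonal_eq_sum_range_succ_mk]
    have : ∀ a ∈ Finset.range (k + 1), k.choose a * (n - k).choose (k - a)
        = k.choose (k - a) * (n - k).choose (k - a) := by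
      intro a ha
      rw [Nat.choose_symm (by simpa using Nat.lt_succ_iff.mp (Finset.mem_range.mp ha))]
    rw [Finset.sum_congr rfl this]
    have hr := Finset.sum_range_reflect (fun j => k.choose j * (n - k).choose j) (k + 1)
    simp only [Nat.add_sub_cancel] at hr
    rw [hr]
    symm
    apply Finset.sum_subset
    · intro x hx; simp at hx ⊢; omega
    · intro x hx hx'
      simp only [Finset.mem_range] at hx hx'
      rw [Nat.choose_eq_zero_of_lt (by omega), zero_mul]
  rw [← key]
  apply Finset.sum_subset
  · intro x hx; simp at hx ⊢; omega
  · intro x hx hx'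
    simp only [Finset.mem_range] at hx hx'
    rcases le_or_gt x k with h | h
    · rw [Nat.choose_eq_zero_of_lt (show n - k < x by omega), mul_zero]
    · rw [Nat.choose_eq_zero_of_lt h, zero_mul]

/-- The `h`-polynomial of the cyclohedron admits the `γ`-expansion
`Σ_{k=0}^n C(n,k)² t^k = Σ_{i=0}^{⌊n/2⌋} (n!/(i!·i!·(n-2i)!)) t^i (1+t)^{n-2i}`;
that is, `γ_i(Cyc_n) = n!/(i!·i!·(n-2i)!)`. -/
theorem cyclohedron_gamma (n : ℕ) :
    (∑ k ∈ Finset.range (n + 1),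
        ((n.choose k : Polynomial ℤ)) ^ 2 * X ^ k) =
      ∑ i ∈ Finset.range (n / 2 + 1),
        ((n.factorial / (i.factorial * i.factorial * (n - 2 * i).factorial) :
            ℕ) : Polynomial ℤ) * X ^ i * (1 + X) ^ (n - 2 * i) := by
  apply Polynomial.ext
  intro k
  rw [finset_sum_coeff, finset_sum_coeff]
  have hL : ∀ m, (((n.choose m : Polynomial ℤ)) ^ 2 * X ^ m).coeff k
      = if k = m then ((n.choose m : ℤ)) ^ 2 else 0 := by
    intro m
    rw [← C_eq_natCast, ← C_pow, coeff_C_mul, coeff_X_pow, mul_ite, mul_one, mul_zero]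
  have hR : ∀ i : ℕ, (((n.factorial / (i.factorial * i.factorial * (n - 2 * i).factorial) :
          ℕ) : Polynomial ℤ) * X ^ i * (1 + X) ^ (n - 2 * i)).coeff k
      = if i ≤ k then
          ((n.factorial / (i.factorial * i.factorial * (n - 2 * i).factorial) : ℕ) : ℤ) *
            ((n - 2 * i).choose (k - i) : ℤ)
        else 0 := by
    intro i
    rw [mul_right_comm, coeff_mul_X_pow', ← C_eq_natCast, coeff_C_mul, coeff_one_add_X_pow]
  rw [Finset.sum_congr rfl (fun m _ => hL m), Finset.sum_congr rfl (fun i _ => hR i),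
    Finset.sum_ite_eq]
  by_cases hkn : k ≤ n
  · rw [if_pos (by simpa using Nat.lt_succ_of_le hkn)]
    have step : ∀ i ∈ Finset.range (n / 2 + 1),
        (if i ≤ k then
          ((n.factorial / (i.factorial * i.factorial * (n - 2 * i).factorial) : ℕ) : ℤ) *
            ((n - 2 * i).choose (k - i) : ℤ)
        else 0) = ((n.choose k * (k.choose i * (n - k).choose i) : ℕ) : ℤ) := by
      intro i hi
      have h2i : 2 * i ≤ n := by
        have := Finset.mem_range.mp hi; omega
      by_cases hik : i ≤ k
      · rw [if_pos hik, ← Nat.cast_mul, aux1 n i h2i, aux2 n k i hkn h2i hik]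
      · rw [if_neg hik,
          Nat.choose_eq_zero_of_lt (show k < i by omega), Nat.zero_mul, Nat.mul_zero,
          Nat.cast_zero]
    rw [Finset.sum_congr rfl step, ← Nat.cast_sum, ← Finset.mul_sum, vander n k hkn]
    push_cast
    ring
  · rw [if_neg (by simpa using Nat.succ_le_of_lt (Nat.lt_of_not_le hkn))]
    symm
    apply Finset.sum_eq_zero
    intro i hi
    have h2i : 2 * i ≤ n := by have := Finset.mem_range.mp hi; omega
    by_cases hik : i ≤ k
    · rw [if_pos hik, Nat.choose_eq_zero_of_lt (by omega), Nat.cast_zero, mul_zero]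
    · rw [if_neg hik]
end

section
/- For every n ≥ 0, the collection Γ(P_n) of all finite subsets of V_{P_n} whose elements are pairwise adjacent is a flag simplicial complex whose number of faces of cardinality i equals n!/(i!·i!·(n−2i)!) for 0 ≤ i ≤ n/2 and 0 for i > n/2. Consequently the γ-vector of the simplicial complex dual to the cyclohedron is the f-vector of a flag simplicial complex and satisfies the Kruskal–Katona inequalities. -/
open Finset

attribute [local instance] Classical.propDecidable

/-- The vertex set `V_{P_n} = {(l,r) ∈ [n] × [n] : l ≠ r}`. -/
def VPn (n : ℕ) : Finset (ℕ × ℕ) :=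
  ((Finset.Icc 1 n) ×ˢ (Finset.Icc 1 n)).filter fun p => p.1 ≠ p.2

/-- `(l₁,r₁)` and `(l₂,r₂)` are adjacent: `l₁, l₂, r₁, r₂` are pairwise distinct
and `l₁ < l₂ ↔ r₁ < r₂`. -/
def AdjP (p q : ℕ × ℕ) : Prop :=
  p.1 ≠ q.1 ∧ p.1 ≠ q.2 ∧ p.2 ≠ q.1 ∧ p.2 ≠ q.2 ∧ (p.1 < q.1 ↔ p.2 < q.2)

/-- `Γ(P_n)`: the collection of all subsets of `V_{P_n}` whose elements are
pairwise adjacent. -/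
noncomputable def GammaPn (n : ℕ) : Finset (Finset (ℕ × ℕ)) :=
  (VPn n).powerset.filter fun S => ∀ p ∈ S, ∀ q ∈ S, p ≠ q → AdjP p q

/-!
A face of `Γ(P_n)` is a set of pairs whose left ends `L` and right ends `R` are disjoint subsets
of `[n]`, and adjacency says exactly that the face is the graph of an order isomorphism `L ≃o R`.
Such an isomorphism exists iff `#L = #R` and is then unique, so the faces of size `i` correspond
to ordered pairs of disjoint `i`-subsets of `[n]`, of which there are
`C(n,i) · C(n-i,i) = n! / (i! i! (n-2i)!)`. Flagness holds because faces are cut out by a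
pairwise condition.
-/

theorem Finset.strictMonoOn_card_filter_lt {α : Type*} [LinearOrder α] (s : Finset α) :
    StrictMonoOn (fun b => #{x ∈ s | x < b}) s := fun b hb _ _ hlt =>
  card_lt_card <| (ssubset_iff_of_subset (monotone_filter_right s fun _ _ hx => hx.trans hlt)).2
    ⟨b, mem_filter.2 ⟨hb, hlt⟩, by simp⟩

/-- Equivalently, `S` is the graph of an order isomorphism between its two projections. -/
def IsMonotoneMatching {α β : Type*} [LinearOrder α] [LinearOrder β] (S : Finset (α × β)) :
    Prop :=
  ∀ p ∈ S, ∀ q ∈ S, p.1 < q.1 ↔ p.2 < q.2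

namespace IsMonotoneMatching

variable {α β : Type*} [LinearOrder α] [LinearOrder β] {S T : Finset (α × β)}

theorem fst_eq_iff (hS : IsMonotoneMatching S) {p q : α × β} (hp : p ∈ S) (hq : q ∈ S) :
    p.1 = q.1 ↔ p.2 = q.2 := by
  have hle : ∀ {p q}, p ∈ S → q ∈ S → (p.1 ≤ q.1 ↔ p.2 ≤ q.2) := fun hp hq => by
    simpa only [not_lt] using (hS _ hq _ hp).not
  rw [le_antisymm_iff, le_antisymm_iff, hle hp hq, hle hq hp]

theorem injOn_fst (hS : IsMonotoneMatching S) : Set.InjOn Prod.fst (S : Set (α × β)) :=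
  fun _ hp _ hq h => Prod.ext h ((hS.fst_eq_iff hp hq).1 h)

theorem injOn_snd (hS : IsMonotoneMatching S) : Set.InjOn Prod.snd (S : Set (α × β)) :=
  fun _ hp _ hq h => Prod.ext ((hS.fst_eq_iff hp hq).2 h) h

theorem card_image_fst [DecidableEq α] (hS : IsMonotoneMatching S) : #(S.image Prod.fst) = #S :=
  card_image_of_injOn hS.injOn_fst

theorem card_image_snd [DecidableEq β] (hS : IsMonotoneMatching S) : #(S.image Prod.snd) = #S :=
  card_image_of_injOn hS.injOn_snd

variable [DecidableEq α] [DecidableEq β]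

theorem card_filter_image_fst_lt (hS : IsMonotoneMatching S) {a : α} {b : β}
    (hab : (a, b) ∈ S) :
    #{x ∈ S.image Prod.fst | x < a} = #{y ∈ S.image Prod.snd | y < b} := by
  rw [filter_image, filter_image,
    card_image_of_injOn (hS.injOn_fst.mono (coe_subset.2 (filter_subset _ _))),
    card_image_of_injOn (hS.injOn_snd.mono (coe_subset.2 (filter_subset _ _)))]
  exact congrArg card (filter_congr fun p hp => hS p hp _ hab)

theorem subset_of_image_eq (hS : IsMonotoneMatching S) (hT : IsMonotoneMatching T)
    (hfst : S.image Prod.fst = T.image Prod.fst) (hsnd : S.image Prod.snd = T.image Prod.snd) :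
    S ⊆ T := by
  rintro ⟨a, b⟩ hab
  obtain ⟨⟨a', b'⟩, hab', ha : a' = a⟩ := mem_image.1 (hfst ▸ mem_image_of_mem Prod.fst hab)
  subst ha
  -- `b` and `b'` both have the rank of `a'` in the common first projection.
  have hrank := (hS.card_filter_image_fst_lt hab).symm.trans
    ((congrArg (fun s => #{x ∈ s | x < a'}) hfst).trans (hT.card_filter_image_fst_lt hab'))
  rw [hsnd] at hrank
  have hb : b = b' := (T.image Prod.snd).strictMonoOn_card_filter_lt.injOn
    (hsnd ▸ mem_image_of_mem Prod.snd hab) (mem_image_of_mem Prod.snd hab') hrank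
  exact hb ▸ hab'

theorem eq_of_image_eq (hS : IsMonotoneMatching S) (hT : IsMonotoneMatching T)
    (hfst : S.image Prod.fst = T.image Prod.fst) (hsnd : S.image Prod.snd = T.image Prod.snd) :
    S = T :=
  (hS.subset_of_image_eq hT hfst hsnd).antisymm (hT.subset_of_image_eq hS hfst.symm hsnd.symm)

theorem exists_of_card_eq {L : Finset α} {R : Finset β} (h : #L = #R) :
    ∃ S : Finset (α × β),
      IsMonotoneMatching S ∧ S.image Prod.fst = L ∧ S.image Prod.snd = R := by
  refine ⟨univ.image fun k => (L.orderEmbOfFin rfl k, R.orderEmbOfFin h.symm k), ?_, ?_, ?_⟩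
  · simp only [IsMonotoneMatching, mem_image, mem_univ, true_and, forall_exists_index]
    rintro _ k rfl _ k' rfl
    simp only [OrderEmbedding.lt_iff_lt]
  · rw [image_image]
    convert L.image_orderEmbOfFin_univ rfl using 2
    rfl
  · rw [image_image]
    convert R.image_orderEmbOfFin_univ h.symm using 2
    rfl

end IsMonotoneMatching

theorem Finset.card_filter_disjoint_powersetCard_product {α : Type*} [DecidableEq α]
    (U : Finset α) (i : ℕ) :
    #{P ∈ U.powersetCard i ×ˢ U.powersetCard i | Disjoint P.1 P.2} =
      (#U).choose i * (#U - i).choose i := by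
  have hfiber : ∀ L ∈ U.powersetCard i,
      #{R ∈ U.powersetCard i | Disjoint L R} = (#U - i).choose i := by
    intro L hL
    rw [mem_powersetCard] at hL
    have : {R ∈ U.powersetCard i | Disjoint L R} = (U \ L).powersetCard i := by
      ext R
      simp only [mem_filter, mem_powersetCard, subset_sdiff, disjoint_comm]
      tauto
    rw [this, card_powersetCard, card_sdiff_of_subset hL.1, hL.2]
  simp_rw [card_filter, sum_product, ← card_filter]
  rw [sum_congr rfl hfiber, sum_const, card_powersetCard, smul_eq_mul]

open Nat in
theorem Nat.choose_mul_choose_sub_eq_factorial_div {n i : ℕ} (h : 2 * i ≤ n) :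
    n.choose i * (n - i).choose i = n ! / (i ! * i ! * (n - 2 * i)!) := by
  refine (Nat.div_eq_of_eq_mul_left (by positivity) ?_).symm
  calc n ! = n.choose i * i ! * ((n - i).choose i * i ! * (n - i - i)!) := by
        rw [choose_mul_factorial_mul_factorial (by omega),
          choose_mul_factorial_mul_factorial (by omega)]
    _ = _ := by rw [show n - 2 * i = n - i - i by omega]; ring

theorem mem_GammaPn {n : ℕ} {S : Finset (ℕ × ℕ)} :
    S ∈ GammaPn n ↔ S ⊆ VPn n ∧ ∀ p ∈ S, ∀ q ∈ S, p ≠ q → AdjP p q := by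
  rw [GammaPn, mem_filter, mem_powerset]

theorem mem_GammaPn_iff_isMonotoneMatching {n : ℕ} {S : Finset (ℕ × ℕ)} :
    S ∈ GammaPn n ↔ S ⊆ Icc 1 n ×ˢ Icc 1 n ∧ IsMonotoneMatching S ∧
      Disjoint (S.image Prod.fst) (S.image Prod.snd) := by
  simp only [mem_GammaPn, VPn, subset_iff, mem_filter]
  constructor
  · rintro ⟨hV, hadj⟩
    refine ⟨fun p hp => (hV hp).1, fun p hp q hq => ?_, disjoint_left.2 ?_⟩
    · by_cases hpq : p = q
      · subst hpq; exact iff_of_false (lt_irrefl _) (lt_irrefl _)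
      · exact (hadj p hp q hq hpq).2.2.2.2
    · intro x hx hx'
      obtain ⟨p, hp, rfl⟩ := mem_image.1 hx
      obtain ⟨q, hq, hqp⟩ := mem_image.1 hx'
      by_cases hpq : p = q
      · subst hpq; exact (hV hp).2 hqp.symm
      · exact (hadj p hp q hq hpq).2.1 hqp.symm
  · rintro ⟨hsub, hS, hdisj⟩
    have hcross : ∀ p ∈ S, ∀ q ∈ S, p.1 ≠ q.2 := fun p hp q hq h =>
      disjoint_left.1 hdisj (mem_image_of_mem _ hp) (h ▸ mem_image_of_mem _ hq)
    exact ⟨fun p hp => ⟨hsub hp, hcross p hp p hp⟩, fun p hp q hq hpq =>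
      ⟨fun h => hpq (hS.injOn_fst hp hq h), hcross p hp q hq, (hcross q hq p hp).symm,
        fun h => hpq (hS.injOn_snd hp hq h), hS p hp q hq⟩⟩

theorem card_faces_GammaPn_eq_card_disjoint_pairs (n i : ℕ) :
    #{S ∈ GammaPn n | #S = i} =
      #{P ∈ (Icc 1 n).powersetCard i ×ˢ (Icc 1 n).powersetCard i | Disjoint P.1 P.2} := by
  refine card_nbij (fun S => (S.image Prod.fst, S.image Prod.snd)) ?_ ?_ ?_
  · intro S hS
    rw [mem_coe, mem_filter, mem_GammaPn_iff_isMonotoneMatching] at hS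
    obtain ⟨⟨hsub, hS, hdisj⟩, rfl⟩ := hS
    rw [mem_coe, mem_filter, mem_product, mem_powersetCard, mem_powersetCard]
    exact ⟨⟨⟨image_subset_iff.2 fun p hp => (mem_product.1 (hsub hp)).1, hS.card_image_fst⟩,
      image_subset_iff.2 fun p hp => (mem_product.1 (hsub hp)).2, hS.card_image_snd⟩,
      hdisj⟩
  · intro S hS T hT h
    rw [mem_coe, mem_filter, mem_GammaPn_iff_isMonotoneMatching] at hS hT
    obtain ⟨hfst, hsnd⟩ := Prod.ext_iff.1 h
    exact hS.1.2.1.eq_of_image_eq hT.1.2.1 hfst hsnd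
  · rintro ⟨L, R⟩ hLR
    rw [mem_coe, mem_filter, mem_product, mem_powersetCard, mem_powersetCard] at hLR
    obtain ⟨⟨⟨hL, hLcard⟩, hR, hRcard⟩, hdisj⟩ := hLR
    obtain ⟨S, hS, rfl, rfl⟩ := IsMonotoneMatching.exists_of_card_eq (hLcard.trans hRcard.symm)
    refine ⟨S, ?_, rfl⟩
    rw [mem_coe, mem_filter, mem_GammaPn_iff_isMonotoneMatching]
    have hsub : S ⊆ Icc 1 n ×ˢ Icc 1 n := fun p hp =>
      mem_product.2 ⟨hL (mem_image_of_mem _ hp), hR (mem_image_of_mem _ hp)⟩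
    exact ⟨⟨hsub, hS, hdisj⟩, hS.card_image_fst ▸ hLcard⟩

theorem empty_mem_GammaPn (n : ℕ) : ∅ ∈ GammaPn n := by
  simp [mem_GammaPn]

theorem GammaPn.mem_of_subset {n : ℕ} {F G : Finset (ℕ × ℕ)} (hF : F ∈ GammaPn n)
    (hG : G ⊆ F) : G ∈ GammaPn n := by
  rw [mem_GammaPn] at hF ⊢
  exact ⟨hG.trans hF.1, fun p hp q hq => hF.2 p (hG hp) q (hG hq)⟩

theorem singleton_mem_GammaPn {n : ℕ} {v : ℕ × ℕ} (hv : v ∈ VPn n) :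
    {v} ∈ GammaPn n := by
  simp [mem_GammaPn, hv]

theorem mem_GammaPn_of_forall_pair_mem {n : ℕ} {S : Finset (ℕ × ℕ)}
    (h1 : ∀ p ∈ S, {p} ∈ GammaPn n)
    (h2 : ∀ p ∈ S, ∀ q ∈ S, p ≠ q → {p, q} ∈ GammaPn n) : S ∈ GammaPn n := by
  refine mem_GammaPn.2 ⟨fun p hp => ?_, fun p hp q hq hpq => ?_⟩
  · exact (mem_GammaPn.1 (h1 p hp)).1 (mem_singleton_self p)
  · exact (mem_GammaPn.1 (h2 p hp q hq hpq)).2 p (mem_insert_self p _) q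
      (mem_insert_of_mem (mem_singleton_self q)) hpq

/-- `Γ(P_n)` is a flag simplicial complex whose number of faces of cardinality `i`
is `n!/(i!·i!·(n-2i)!)` for `0 ≤ i ≤ n/2` and `0` for `i > n/2`.  Consequently the
`γ`-vector of the simplicial complex dual to the cyclohedron is the `f`-vector of a
flag simplicial complex and satisfies the Kruskal–Katona inequalities. -/
theorem cyclohedron_gamma_complex (n : ℕ) :
    ∅ ∈ GammaPn n ∧
    (∀ F ∈ GammaPn n, ∀ G ⊆ F, G ∈ GammaPn n) ∧
    (∀ v ∈ VPn n, ({v} : Finset (ℕ × ℕ)) ∈ GammaPn n) ∧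
    (∀ S : Finset (ℕ × ℕ),
      (∀ p ∈ S, ({p} : Finset (ℕ × ℕ)) ∈ GammaPn n) →
      (∀ p ∈ S, ∀ q ∈ S, p ≠ q → ({p, q} : Finset (ℕ × ℕ)) ∈ GammaPn n) →
      S ∈ GammaPn n) ∧
    (∀ i : ℕ, ((GammaPn n).filter fun S => S.card = i).card =
      if 2 * i ≤ n then
        n.factorial / (i.factorial * i.factorial * (n - 2 * i).factorial)
      else 0) := by
  refine ⟨empty_mem_GammaPn n, fun F hF G hG => GammaPn.mem_of_subset hF hG,
    fun v hv => singleton_mem_GammaPn hv, fun S => mem_GammaPn_of_forall_pair_mem, fun i => ?_⟩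
  rw [card_faces_GammaPn_eq_card_disjoint_pairs, card_filter_disjoint_powersetCard_product,
    Nat.card_Icc, Nat.add_sub_cancel]
  split_ifs with h
  · exact Nat.choose_mul_choose_sub_eq_factorial_div h
  · rw [Nat.choose_eq_zero_of_lt (by omega : n - i < i), mul_zero]
end

section
/- For every n ≥ 0 and k ≥ 0, the map ψ sending a pair σ = (L,R) of disjoint k-element subsets L = {l_1 < ⋯ < l_k} and R = {r_1 < ⋯ < r_k} of [n] to the set of rows ψ(σ) = {(l_1,r_1), …, (l_k,r_k)} is a bijection from {(L,R) : L,R ⊆ [n], |L| = |R| = k, L ∩ R = ∅} onto the k-element subsets of V_{P_n} whose elements are pairwise adjacent. -/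
open Finset

/-- The map `ψ` sending a pair `σ = (L,R)` of disjoint sets
`L = {l₁ < ⋯ < l_k}`, `R = {r₁ < ⋯ < r_k}` to its set of rows
`{(l₁,r₁), …, (l_k,r_k)}`. -/
def psi (LR : Finset ℕ × Finset ℕ) : Finset (ℕ × ℕ) :=
  ((LR.1.sort (· ≤ ·)).zip (LR.2.sort (· ≤ ·))).toFinset

/-!
Adjacency forbids two rows from sharing a coordinate and forces `l₁ < l₂ ↔ r₁ < r₂`, so a
set of pairwise adjacent rows, listed by increasing first coordinate, is strictly increasing
in both coordinates. Such a list is the zip of its two sorted projections, hence equals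
`ψ(L, R)` for `L`, `R` its sets of first and second coordinates; and `ψ(L, R)` determines
`(L, R)` in the same way. Conversely, the zip of two sorted lists is strictly increasing in
both coordinates, and disjointness of `L` and `R` supplies the remaining inequalities.
-/

section

variable {α β : Type*}

theorem List.Pairwise.zip {R : α → α → Prop} {R' : β → β → Prop} :
    ∀ {l : List α} {l' : List β}, l.Pairwise R → l'.Pairwise R' →
      (l.zip l').Pairwise fun p q => R p.1 q.1 ∧ R' p.2 q.2
  | [], _, _, _ => by simp
  | _ :: _, [], _, _ => by simp
  | _ :: _, _ :: _, hl, hl' => by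
    rw [List.pairwise_cons] at hl hl'
    rw [List.zip_cons_cons, List.pairwise_cons]
    exact ⟨fun _ hp => ⟨hl.1 _ (List.of_mem_zip hp).1, hl'.1 _ (List.of_mem_zip hp).2⟩,
      hl.2.zip hl'.2⟩

theorem exists_list_pairwise_lt_lt_of_injOn_fst [LinearOrder α] [LinearOrder β]
    {S : Finset (α × β)} (hinj : Set.InjOn Prod.fst (S : Set (α × β)))
    (hmono : ∀ p ∈ S, ∀ q ∈ S, p.1 < q.1 → p.2 < q.2) :
    ∃ l : List (α × β), l.toFinset = S ∧ l.Pairwise fun p q => p.1 < q.1 ∧ p.2 < q.2 := by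
  classical
  -- Lexicographic order on `S` is the order by first coordinate, since those are distinct.
  refine ⟨((S.map toLex.toEmbedding).sort (· ≤ ·)).map ofLex, by ext; simp, ?_⟩
  refine List.pairwise_map.2 <|
    (sortedLT_sort _).pairwise.imp_of_mem fun {a b} ha hb hab => ?_
  simp only [mem_sort, mem_map_equiv] at ha hb
  have hfst : (ofLex a).1 < (ofLex b).1 := by
    rcases Prod.Lex.lt_iff.1 hab with h | ⟨h, -⟩
    · exact h
    · exact absurd (hinj ha hb h) (ofLex.injective.ne hab.ne)
  exact ⟨hfst, hmono _ ha _ hb hfst⟩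

theorem pairwise_zip_sort [LinearOrder α] [LinearOrder β] (L : Finset α) (R : Finset β) :
    ((L.sort (· ≤ ·)).zip (R.sort (· ≤ ·))).Pairwise fun p q => p.1 < q.1 ∧ p.2 < q.2 :=
  (sortedLT_sort L).pairwise.zip (sortedLT_sort R).pairwise

end

instance : Std.Symm AdjP where
  symm _ _ h := ⟨h.1.symm, h.2.2.1.symm, h.2.1.symm, h.2.2.2.1.symm, by
    obtain ⟨h1, -, -, h4, h5⟩ := h
    omega⟩

theorem adjP_of_lt_of_lt {p q : ℕ × ℕ} (h1 : p.1 < q.1) (h2 : p.2 < q.2) (h12 : p.1 ≠ q.2)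
    (h21 : p.2 ≠ q.1) : AdjP p q :=
  ⟨h1.ne, h12, h21, h2.ne, iff_of_true h1 h2⟩

theorem mem_VPn {n : ℕ} {p : ℕ × ℕ} :
    p ∈ VPn n ↔ p.1 ∈ Icc 1 n ∧ p.2 ∈ Icc 1 n ∧ p.1 ≠ p.2 := by
  simp only [VPn, mem_filter, mem_product, and_assoc]

theorem mem_psi {L R : Finset ℕ} {p : ℕ × ℕ} (hp : p ∈ psi (L, R)) :
    p.1 ∈ L ∧ p.2 ∈ R := by
  rw [psi, List.mem_toFinset] at hp
  simpa using List.of_mem_zip hp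

theorem card_psi {L R : Finset ℕ} (h : L.card = R.card) : (psi (L, R)).card = L.card := by
  have hnodup : ((L.sort (· ≤ ·)).zip (R.sort (· ≤ ·))).Nodup :=
    (pairwise_zip_sort L R).imp fun h => ne_of_apply_ne Prod.fst h.1.ne
  rw [psi, List.toFinset_card_of_nodup hnodup, List.length_zip, length_sort, length_sort, h,
    min_self]

theorem image_fst_psi {L R : Finset ℕ} (h : L.card = R.card) :
    (psi (L, R)).image Prod.fst = L :=
  calc (psi (L, R)).image Prod.fst
      = (((L.sort (· ≤ ·)).zip (R.sort (· ≤ ·))).map Prod.fst).toFinset := by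
        ext; simp [psi]
    _ = L := by rw [List.map_fst_zip (by simp [h]), sort_toFinset]

theorem image_snd_psi {L R : Finset ℕ} (h : L.card = R.card) :
    (psi (L, R)).image Prod.snd = R :=
  calc (psi (L, R)).image Prod.snd
      = (((L.sort (· ≤ ·)).zip (R.sort (· ≤ ·))).map Prod.snd).toFinset := by
        ext; simp [psi]
    _ = R := by rw [List.map_snd_zip (by simp [h]), sort_toFinset]

theorem adjP_of_mem_psi {L R : Finset ℕ} (hLR : Disjoint L R) {p q : ℕ × ℕ}
    (hp : p ∈ psi (L, R)) (hq : q ∈ psi (L, R)) (hpq : p ≠ q) : AdjP p q := by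
  have hadj : ((L.sort (· ≤ ·)).zip (R.sort (· ≤ ·))).Pairwise AdjP := by
    refine (pairwise_zip_sort L R).imp_of_mem fun {a b} ha hb hab =>
      adjP_of_lt_of_lt hab.1 hab.2 ?_ ?_
    · exact fun h => disjoint_left.1 hLR (mem_psi (List.mem_toFinset.2 ha)).1
        (h ▸ (mem_psi (List.mem_toFinset.2 hb)).2)
    · exact fun h => disjoint_left.1 hLR (mem_psi (List.mem_toFinset.2 hb)).1
        (h ▸ (mem_psi (List.mem_toFinset.2 ha)).2)
  exact hadj.forall (List.mem_toFinset.1 hp) (List.mem_toFinset.1 hq) hpq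

theorem psi_eq_toFinset_of_pairwise {l : List (ℕ × ℕ)}
    (hl : l.Pairwise fun p q => p.1 < q.1 ∧ p.2 < q.2) :
    psi ((l.map Prod.fst).toFinset, (l.map Prod.snd).toFinset) = l.toFinset := by
  have hfst : (l.map Prod.fst).Pairwise (· < ·) := List.pairwise_map.2 (hl.imp And.left)
  have hsnd : (l.map Prod.snd).Pairwise (· < ·) := List.pairwise_map.2 (hl.imp And.right)
  rw [psi, (List.toFinset_sort _ hfst.sortedLT.nodup).2 (hfst.imp le_of_lt),
    (List.toFinset_sort _ hsnd.sortedLT.nodup).2 (hsnd.imp le_of_lt), ← List.unzip_fst,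
    ← List.unzip_snd, List.zip_unzip]

theorem psi_image_fst_image_snd {S : Finset (ℕ × ℕ)}
    (hinj : Set.InjOn Prod.fst (S : Set (ℕ × ℕ)))
    (hmono : ∀ p ∈ S, ∀ q ∈ S, p.1 < q.1 → p.2 < q.2) :
    psi (S.image Prod.fst, S.image Prod.snd) = S := by
  obtain ⟨l, rfl, hl⟩ := exists_list_pairwise_lt_lt_of_injOn_fst hinj hmono
  convert psi_eq_toFinset_of_pairwise hl using 3 <;> ext <;> simp

def disjointPairs (n k : ℕ) : Set (Finset ℕ × Finset ℕ) :=
  {LR | LR.1 ⊆ Icc 1 n ∧ LR.2 ⊆ Icc 1 n ∧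
    LR.1.card = k ∧ LR.2.card = k ∧ Disjoint LR.1 LR.2}

def adjCliques (n k : ℕ) : Set (Finset (ℕ × ℕ)) :=
  {S | S.card = k ∧ (∀ p ∈ S, p ∈ VPn n) ∧
    (∀ p ∈ S, ∀ q ∈ S, p ≠ q → AdjP p q)}

theorem psi_mapsTo (n k : ℕ) : Set.MapsTo psi (disjointPairs n k) (adjCliques n k) := by
  rintro ⟨L, R⟩ ⟨hLn, hRn, hLk, hRk, hLR⟩
  refine ⟨(card_psi (hLk.trans hRk.symm)).trans hLk, fun p hp => ?_,
    fun p hp q hq => adjP_of_mem_psi hLR hp hq⟩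
  obtain ⟨hpL, hpR⟩ := mem_psi hp
  exact mem_VPn.2 ⟨hLn hpL, hRn hpR, fun h => disjoint_left.1 hLR hpL (h ▸ hpR)⟩

theorem psi_injOn : Set.InjOn psi {LR | LR.1.card = LR.2.card} := by
  rintro ⟨L₁, R₁⟩ h₁ ⟨L₂, R₂⟩ h₂ h
  exact Prod.ext ((image_fst_psi h₁).symm.trans (by rw [h, image_fst_psi h₂]))
    ((image_snd_psi h₁).symm.trans (by rw [h, image_snd_psi h₂]))

theorem psi_surjOn (n k : ℕ) : Set.SurjOn psi (disjointPairs n k) (adjCliques n k) := by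
  rintro S ⟨hSk, hSV, hSadj⟩
  have hfst : Set.InjOn Prod.fst (S : Set (ℕ × ℕ)) := fun p hp q hq h =>
    by_contra fun hpq => (hSadj p hp q hq hpq).1 h
  have hsnd : Set.InjOn Prod.snd (S : Set (ℕ × ℕ)) := fun p hp q hq h =>
    by_contra fun hpq => (hSadj p hp q hq hpq).2.2.2.1 h
  have hmono : ∀ p ∈ S, ∀ q ∈ S, p.1 < q.1 → p.2 < q.2 := fun p hp q hq h =>
    (hSadj p hp q hq (ne_of_apply_ne Prod.fst h.ne)).2.2.2.2.1 h
  refine ⟨(S.image Prod.fst, S.image Prod.snd), ⟨?_, ?_, (card_image_of_injOn hfst).trans hSk,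
    (card_image_of_injOn hsnd).trans hSk, ?_⟩, psi_image_fst_image_snd hfst hmono⟩
  · exact image_subset_iff.2 fun p hp => (mem_VPn.1 (hSV p hp)).1
  · exact image_subset_iff.2 fun p hp => (mem_VPn.1 (hSV p hp)).2.1
  · refine disjoint_left.2 fun x hxL hxR => ?_
    obtain ⟨p, hp, rfl⟩ := mem_image.1 hxL
    obtain ⟨q, hq, hqp⟩ := mem_image.1 hxR
    rcases eq_or_ne q p with rfl | hne
    · exact (mem_VPn.1 (hSV q hq)).2.2 hqp.symm
    · exact (hSadj q hq p hp hne).2.2.1 hqp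

/-- `ψ` is a bijection from pairs of disjoint `k`-element subsets of `[n]` onto the
`k`-element subsets of `V_{P_n}` whose elements are pairwise adjacent. -/
theorem psi_bijection (n k : ℕ) :
    Set.BijOn psi
      {LR : Finset ℕ × Finset ℕ |
        LR.1 ⊆ Finset.Icc 1 n ∧ LR.2 ⊆ Finset.Icc 1 n ∧
        LR.1.card = k ∧ LR.2.card = k ∧ Disjoint LR.1 LR.2}
      {S : Finset (ℕ × ℕ) | S.card = k ∧ (∀ p ∈ S, p ∈ VPn n) ∧
        (∀ p ∈ S, ∀ q ∈ S, p ≠ q → AdjP p q)} :=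
  ⟨psi_mapsTo n k, psi_injOn.mono fun _ h => h.2.2.1.trans h.2.2.2.1.symm, psi_surjOn n k⟩
end

section
/- Let w ∈ Pk_n(312) have descents at positions p_1 < ⋯ < p_k, and set j_s = w_{p_s} and i_s = w_{p_s + 1}. Then: (1) w_n = n; (2) j_1 < j_2 < ⋯ < j_k; (3) j_s > i_s for all s; (4) any two descent pairs (i_s, j_s) and (i_t, j_t), s ≠ t, are noncrossing; and (5) setting j_0 = 0 and j_{k+1} = n+1, the letters of w lying at positions outside {p_1, p_1+1, …, p_k, p_k+1}, between the s-th and (s+1)-th descent, are exactly the elements of [n] \ {i_1, j_1, …, i_k, j_k} lying strictly between j_s and j_{s+1}, and they appear in increasing order. -/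
open Finset

/-- A position `j` of `w` is free if it is not part of any descent pair,
i.e. neither `j` nor `j - 1` is a descent position. -/
def IsFree (n : ℕ) (w : Equiv.Perm (Fin n)) (j : ℕ) : Prop :=
  j ∈ Finset.Icc 1 n ∧ j ∉ desSet n w ∧ j - 1 ∉ desSet n w

lemma pval_bounds (n : ℕ) (w : Equiv.Perm (Fin n)) {i : ℕ} (h1 : 1 ≤ i) (h2 : i ≤ n) :
    1 ≤ pval n w i ∧ pval n w i ≤ n := by
  unfold pval
  rw [dif_pos ⟨h1, h2⟩]
  have := (w ⟨i - 1, by omega⟩).isLt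
  omega

lemma pval_inj (n : ℕ) (w : Equiv.Perm (Fin n)) {a b : ℕ} (ha1 : 1 ≤ a) (ha2 : a ≤ n)
    (hb1 : 1 ≤ b) (hb2 : b ≤ n) (h : pval n w a = pval n w b) : a = b := by
  unfold pval at h
  rw [dif_pos ⟨ha1, ha2⟩, dif_pos ⟨hb1, hb2⟩] at h
  have h3 : (⟨a - 1, by omega⟩ : Fin n) = ⟨b - 1, by omega⟩ :=
    w.injective (Fin.val_injective (by omega))
  have h4 : a - 1 = b - 1 := congrArg Fin.val h3
  omega

lemma pval_surj (n : ℕ) (w : Equiv.Perm (Fin n)) {c : ℕ} (hc1 : 1 ≤ c) (hc2 : c ≤ n) :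
    ∃ m, 1 ≤ m ∧ m ≤ n ∧ pval n w m = c := by
  have hlt := (w.symm ⟨c - 1, by omega⟩).isLt
  refine ⟨(w.symm ⟨c - 1, by omega⟩).val + 1, by omega, by omega, ?_⟩
  unfold pval
  rw [dif_pos ⟨by omega, by omega⟩]
  have h : (⟨(w.symm ⟨c - 1, by omega⟩).val + 1 - 1, by omega⟩ : Fin n)
      = w.symm ⟨c - 1, by omega⟩ := Fin.ext (by simp)
  rw [h, Equiv.apply_symm_apply]
  simp only [Fin.val_mk]
  omega

lemma mem_desSet (n : ℕ) (w : Equiv.Perm (Fin n)) {p : ℕ} :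
    p ∈ desSet n w ↔ (1 ≤ p ∧ p ≤ n - 1) ∧ pval n w (p + 1) < pval n w p := by
  simp only [desSet, Finset.mem_filter, Finset.mem_Icc]

/-- Workhorse: in a 312-avoiding permutation, a position that is not a descent
bottom carries a value larger than all earlier values. -/
lemma workhorse (n : ℕ) (w : Equiv.Perm (Fin n)) (h2 : Avoids312 n w)
    {j m : ℕ} (hjn : j ≤ n) (hnb : (j - 1) ∉ desSet n w)
    (hm1 : 1 ≤ m) (hmj : m < j) : pval n w m < pval n w j := by
  by_contra hcon
  have hj1 : 1 ≤ j := by omega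
  have hmne : pval n w m ≠ pval n w j := fun h =>
    absurd (pval_inj n w hm1 (by omega) hj1 hjn h) (by omega)
  have hvm : pval n w j < pval n w m := by omega
  set S := (Finset.Icc 1 (j - 1)).filter (fun x => pval n w j < pval n w x) with hSdef
  have hS : S.Nonempty :=
    ⟨m, Finset.mem_filter.mpr ⟨Finset.mem_Icc.mpr ⟨hm1, by omega⟩, hvm⟩⟩
  obtain ⟨M, hMS, hMmax⟩ : ∃ M ∈ S, ∀ x ∈ S, x ≤ M :=
    ⟨S.max' hS, S.max'_mem hS, fun x hx => S.le_max' x hx⟩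
  obtain ⟨hMIcc, hMlt⟩ := Finset.mem_filter.mp hMS
  obtain ⟨hM1, hM2⟩ := Finset.mem_Icc.mp hMIcc
  have hMne : M ≠ j - 1 := by
    intro h
    apply hnb
    rw [mem_desSet n w]
    refine ⟨⟨by omega, by omega⟩, ?_⟩
    rw [show j - 1 + 1 = j from by omega, ← h]
    exact hMlt
  have hnotS : M + 1 ∉ S := fun hmem => by have := hMmax _ hmem; omega
  have h1' : ¬ (pval n w j < pval n w (M + 1)) := fun hlt =>
    hnotS (Finset.mem_filter.mpr ⟨Finset.mem_Icc.mpr ⟨by omega, by omega⟩, hlt⟩)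
  have hne2 : pval n w (M + 1) ≠ pval n w j := fun h =>
    absurd (pval_inj n w (by omega) (by omega) hj1 hjn h) (by omega)
  have hlt2 : pval n w (M + 1) < pval n w j := by omega
  exact h2 M (Finset.mem_Icc.mpr ⟨by omega, by omega⟩)
    (M + 1) (Finset.mem_Icc.mpr ⟨by omega, by omega⟩)
    j (Finset.mem_Icc.mpr ⟨hj1, hjn⟩) (by omega) (by omega) ⟨hlt2, hMlt⟩

/-- A descent position is never a descent bottom (no double descents). -/
lemma no_bottom (n : ℕ) (w : Equiv.Perm (Fin n)) (h1 : IsPk n w)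
    {q : ℕ} (hq : q ∈ desSet n w) : q - 1 ∉ desSet n w := by
  intro hq1
  rw [mem_desSet] at hq hq1
  obtain ⟨⟨hqa, hqb⟩, hqd⟩ := hq
  obtain ⟨⟨ha, hb⟩, hd⟩ := hq1
  rw [show q - 1 + 1 = q from by omega] at hd
  exact h1.1 q (Finset.mem_Icc.mpr ⟨by omega, by omega⟩) ⟨hd, hqd⟩

lemma noncrossing_symm {p q : ℕ × ℕ} (h : Noncrossing p q) : Noncrossing q p := by
  obtain ⟨a, b, c, d, e, f⟩ := h
  exact ⟨fun h => a h.symm, fun h => c h.symm, fun h => b h.symm, fun h => d h.symm, f, e⟩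

/-- Structure of a permutation `w ∈ Pk_n(312)` (with descent tops `j_s = w_{p_s}` and
descent bottoms `i_s = w_{p_s+1}` at the descent positions `p_1 < ⋯ < p_k`):
(1) `w_n = n`;
(2) the descent tops increase with position: `p < q → w_p < w_q`;
(3) `w_p > w_{p+1}` for each descent `p`;
(4) distinct descent pairs `(w_{p+1}, w_p)` and `(w_{q+1}, w_q)` are noncrossing;
(5) the letters at free positions appear in increasing order and, for a free
position `j` and a descent `p`, the letter `w_j` lies above the descent top `w_p`
exactly when `j` lies after `p` — i.e. the free letters lying between consecutive
descents are exactly the non-descent letters lying strictly between the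
corresponding descent tops, in increasing order. -/
theorem pk312_structure (n : ℕ) (hn : 1 ≤ n) (w : Equiv.Perm (Fin n))
    (h1 : IsPk n w) (h2 : Avoids312 n w) :
    pval n w n = n ∧
    (∀ p ∈ desSet n w, ∀ q ∈ desSet n w, p < q → pval n w p < pval n w q) ∧
    (∀ p ∈ desSet n w, pval n w (p + 1) < pval n w p) ∧
    (∀ p ∈ desSet n w, ∀ q ∈ desSet n w, p ≠ q →
      Noncrossing (pval n w (p + 1), pval n w p) (pval n w (q + 1), pval n w q)) ∧
    (∀ j, IsFree n w j → ∀ j', IsFree n w j' → j < j' → pval n w j < pval n w j') ∧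
    (∀ j, IsFree n w j → ∀ p ∈ desSet n w, (p < j ↔ pval n w p < pval n w j)) := by
  have hlast : (n - 1) ∉ desSet n w := by
    intro h
    rw [mem_desSet] at h
    obtain ⟨⟨ha, hb⟩, hd⟩ := h
    rw [show n - 1 + 1 = n from by omega] at hd
    exact h1.2 hd
  -- Part (2)
  have part2 : ∀ p ∈ desSet n w, ∀ q ∈ desSet n w, p < q → pval n w p < pval n w q := by
    intro p hp q hq hpq
    have hp' := (mem_desSet n w).mp hp
    have hq' := (mem_desSet n w).mp hq
    exact workhorse n w h2 (by omega) (no_bottom n w h1 hq) hp'.1.1 hpq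
  -- Part (1)
  have part1 : pval n w n = n := by
    have hle := (pval_bounds n w hn le_rfl).2
    obtain ⟨m, hm1, hm2, hm3⟩ := pval_surj n w hn (le_refl n)
    by_cases hmn : m = n
    · subst hmn; exact hm3
    · have := workhorse n w h2 le_rfl hlast hm1 (by omega)
      omega
  -- Key ordered noncrossing
  have key : ∀ p ∈ desSet n w, ∀ q ∈ desSet n w, p < q →
      Noncrossing (pval n w (p + 1), pval n w p) (pval n w (q + 1), pval n w q) := by
    intro p hp q hq hpq
    have hp' := (mem_desSet n w).mp hp
    have hq' := (mem_desSet n w).mp hq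
    have hplt := part2 p hp q hq hpq
    have hq1 : q - 1 ∉ desSet n w := no_bottom n w h1 hq
    have hpq2 : p + 1 < q := by
      rcases Nat.lt_or_ge (p + 1) q with h | h
      · exact h
      · have hpe : p = q - 1 := by omega
        exact absurd (hpe ▸ hp) hq1
    have inj : ∀ a b : ℕ, 1 ≤ a → a ≤ n → 1 ≤ b → b ≤ n → a ≠ b →
        pval n w a ≠ pval n w b :=
      fun a b ha1 ha2 hb1 hb2 hne h => hne (pval_inj n w ha1 ha2 hb1 hb2 h)
    have hqn : q + 1 ≤ n := by omega
    have hpn : p + 1 ≤ n := by omega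
    refine ⟨inj _ _ (by omega) hpn (by omega) hqn (by omega),
            inj _ _ (by omega) hpn (by omega) (by omega) (by omega),
            inj _ _ (by omega) (by omega) (by omega) hqn (by omega),
            inj _ _ (by omega) (by omega) (by omega) (by omega) (by omega),
            ?_, fun h => by omega⟩
    rintro ⟨hA, hB, hC⟩
    exact h2 p (Finset.mem_Icc.mpr ⟨by omega, by omega⟩)
      (p + 1) (Finset.mem_Icc.mpr ⟨by omega, hpn⟩)
      (q + 1) (Finset.mem_Icc.mpr ⟨by omega, hqn⟩) (by omega) (by omega) ⟨hA, hB⟩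
  refine ⟨part1, part2, fun p hp => ((mem_desSet n w).mp hp).2, ?_, ?_, ?_⟩
  · intro p hp q hq hne
    rcases lt_trichotomy p q with h | h | h
    · exact key p hp q hq h
    · exact absurd h hne
    · exact noncrossing_symm (key q hq p hp h)
  · intro j hj j' hj' hlt
    exact workhorse n w h2 (Finset.mem_Icc.mp hj'.1).2 hj'.2.2 (Finset.mem_Icc.mp hj.1).1 hlt
  · intro j hj p hp
    have hj1 := Finset.mem_Icc.mp hj.1
    have hp' := (mem_desSet n w).mp hp
    constructor
    · intro hlt
      exact workhorse n w h2 hj1.2 hj.2.2 hp'.1.1 hlt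
    · intro hlt
      by_contra hnl
      have hne : j ≠ p := fun h => hj.2.1 (h ▸ hp)
      have hjp : j < p := by omega
      have := workhorse n w h2 (by omega) (no_bottom n w h1 hp) hj1.1 hjp
      omega
end

section
/- Let Δ be a flag simplicial complex and {u,v} ∈ Δ an edge, and let Δ' be the contraction of {u,v}: Δ' = {F ∈ Δ : u ∉ F} ∪ {(F \ {u}) ∪ {v} : F ∈ Δ, u ∈ F}. If Δ' is not flag, then {u,v} is contained in an induced 4-cycle of Δ: there exist distinct vertices a, b ∉ {u,v} with {u,a}, {a,b}, {b,v} ∈ Δ and {v,a} ∉ Δ, {u,b} ∉ Δ. -/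
open Finset

/-- The contraction of the edge `{u,v}` in `Δ`:
`Δ' = {F ∈ Δ : u ∉ F} ∪ {(F \ {u}) ∪ {v} : F ∈ Δ, u ∈ F}`. -/
def contractEdge {V : Type*} [DecidableEq V] (Δ : Set (Finset V)) (u v : V) :
    Set (Finset V) :=
  {F | F ∈ Δ ∧ u ∉ F} ∪ {G | ∃ F ∈ Δ, u ∈ F ∧ G = insert v (F.erase u)}

/-- If `Δ` is a flag simplicial complex, `{u,v} ∈ Δ` an edge, and the contraction
`Δ'` of `{u,v}` is not flag, then `{u,v}` is contained in an induced `4`-cycle of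
`Δ`: there are distinct vertices `a, b ∉ {u,v}` with `{u,a}, {a,b}, {b,v} ∈ Δ` and
`{v,a} ∉ Δ`, `{u,b} ∉ Δ`. -/
theorem contraction_not_flag_induced_four_cycle {V : Type*} [DecidableEq V]
    (Δ : Set (Finset V)) (u v : V) (huv : u ≠ v)
    (he : ({u, v} : Finset V) ∈ Δ)
    (h_empty : ∅ ∈ Δ)
    (h_down : ∀ F ∈ Δ, ∀ G ⊆ F, G ∈ Δ)
    (h_vert : ∀ x : V, ({x} : Finset V) ∈ Δ)
    (h_flag : ∀ F : Finset V,
      (∀ a ∈ F, ∀ b ∈ F, a ≠ b → ({a, b} : Finset V) ∈ Δ) → F ∈ Δ)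
    (h_not_flag : ¬(∀ F : Finset V,
      (∀ a ∈ F, ({a} : Finset V) ∈ contractEdge Δ u v) →
      (∀ a ∈ F, ∀ b ∈ F, a ≠ b → ({a, b} : Finset V) ∈ contractEdge Δ u v) →
      F ∈ contractEdge Δ u v)) :
    ∃ a b : V, a ≠ b ∧ a ≠ u ∧ a ≠ v ∧ b ≠ u ∧ b ≠ v ∧
      ({u, a} : Finset V) ∈ Δ ∧ ({a, b} : Finset V) ∈ Δ ∧
      ({b, v} : Finset V) ∈ Δ ∧
      ({v, a} : Finset V) ∉ Δ ∧ ({u, b} : Finset V) ∉ Δ := by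
  push_neg at h_not_flag
  obtain ⟨F, h1, h2, h3⟩ := h_not_flag
  simp only [contractEdge, Set.mem_union, Set.mem_setOf_eq, not_or] at h3
  -- u ∉ F
  have hu : u ∉ F := by
    intro hu
    have := h1 u hu
    rcases this with ⟨_, h⟩ | ⟨G, _, _, hG⟩
    · exact h (mem_singleton_self u)
    · have hv : v ∈ ({u} : Finset V) := hG ▸ mem_insert_self v _
      exact huv (mem_singleton.mp hv).symm
  -- edges inside F avoiding v are in Δ
  have hedge : ∀ a ∈ F, ∀ b ∈ F, a ≠ b → a ≠ v → b ≠ v → ({a, b} : Finset V) ∈ Δ := by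
    intro a ha b hb hab hav hbv
    rcases h2 a ha b hb hab with ⟨h, _⟩ | ⟨G, _, _, hG⟩
    · exact h
    · have hv : v ∈ ({a, b} : Finset V) := hG ▸ mem_insert_self v _
      rcases mem_insert.mp hv with h | h
      · exact absurd h.symm hav
      · exact absurd (mem_singleton.mp h).symm hbv
  -- v ∈ F
  have hv : v ∈ F := by
    by_contra hv
    have hF : F ∈ Δ := h_flag F (fun a ha b hb hab =>
      hedge a ha b hb hab (fun h => hv (h ▸ ha)) (fun h => hv (h ▸ hb)))
    exact h3.1 ⟨hF, hu⟩
  -- key dichotomy for x ∈ F, x ≠ v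
  have hkey : ∀ x ∈ F, x ≠ v → ({x, v} : Finset V) ∈ Δ ∨ ({u, x} : Finset V) ∈ Δ := by
    intro x hx hxv
    rcases h2 x hx v hv hxv with ⟨h, _⟩ | ⟨G, hG, huG, hGe⟩
    · exact Or.inl h
    · right
      have hxG : x ∈ G := by
        have : x ∈ ({x, v} : Finset V) := mem_insert_self x _
        rw [hGe] at this
        rcases mem_insert.mp this with h | h
        · exact absurd h hxv
        · exact mem_of_mem_erase h
      refine h_down G hG _ ?_
      intro y hy
      rcases mem_insert.mp hy with h | h
      · exact h ▸ huG
      · exact (mem_singleton.mp h) ▸ hxG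
  by_cases hB : ∃ b ∈ F, b ≠ v ∧ ({b, v} : Finset V) ∉ Δ
  · obtain ⟨b₀, hb₀F, hb₀v, hb₀⟩ := hB
    have hub₀ : ({u, b₀} : Finset V) ∈ Δ := by
      rcases hkey b₀ hb₀F hb₀v with h | h
      · exact absurd h hb₀
      · exact h
    by_cases hA : ∃ a ∈ F, a ≠ v ∧ ({u, a} : Finset V) ∉ Δ
    · obtain ⟨a₀, ha₀F, ha₀v, ha₀⟩ := hA
      have hav : ({a₀, v} : Finset V) ∈ Δ := by
        rcases hkey a₀ ha₀F ha₀v with h | h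
        · exact h
        · exact absurd h ha₀
      have hne : b₀ ≠ a₀ := fun h => ha₀ (h ▸ hub₀)
      refine ⟨b₀, a₀, hne, fun h => hu (h ▸ hb₀F), hb₀v,
        fun h => hu (h ▸ ha₀F), ha₀v, hub₀, ?_, hav, ?_, ha₀⟩
      · exact hedge b₀ hb₀F a₀ ha₀F hne hb₀v ha₀v
      · rw [pair_comm]; exact hb₀
    · -- all x ∈ F with x ≠ v satisfy {u,x} ∈ Δ; then insert u (F.erase v) ∈ Δ
      push_neg at hA
      exfalso
      set G := insert u (F.erase v) with hGdef
      have hGΔ : G ∈ Δ := by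
        apply h_flag
        intro a ha b hb hab
        rcases mem_insert.mp ha with rfl | ha'
        · rcases mem_insert.mp hb with rfl | hb'
          · exact absurd rfl hab
          · exact hA b (mem_of_mem_erase hb') (ne_of_mem_erase hb')
        · rcases mem_insert.mp hb with rfl | hb'
          · rw [pair_comm]
            exact hA a (mem_of_mem_erase ha') (ne_of_mem_erase ha')
          · exact hedge a (mem_of_mem_erase ha') b (mem_of_mem_erase hb') hab
              (ne_of_mem_erase ha') (ne_of_mem_erase hb')
      have huFv : u ∉ F.erase v := fun h => hu (mem_of_mem_erase h)
      exact h3.2 ⟨G, hGΔ, mem_insert_self u _, by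
        rw [hGdef, erase_insert huFv, insert_erase hv]⟩
  · -- all x ∈ F satisfy {x,v} ∈ Δ; then F ∈ Δ
    push_neg at hB
    exfalso
    have hF : F ∈ Δ := by
      apply h_flag
      intro a ha b hb hab
      by_cases hav : a = v
      · subst hav
        rw [pair_comm]
        exact hB b hb (fun h => hab h.symm)
      · by_cases hbv : b = v
        · subst hbv
          exact hB a ha hav
        · exact hedge a ha b hb hab hav hbv
    exact h3.1 ⟨hF, hu⟩
end
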